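/- arXiv:1804.00597 — 11 statements merged into one kernel-verified Lean document; each statement's English description precedes it below -/
import Mathlib

section
/- Let R be an associative unital ℂ-algebra and c ∈ ℂ nonzero. Suppose a, b : D → R (for a subset D ⊆ ℂ) satisfy b(u)b(v) = b(v)b(u) for all u, v ∈ D, and a(v)b(u) = f(u,v) b(u)a(v) + g(v,u) b(v)a(u) for all distinct u, v ∈ D. Then for any pairwise distinct u_1, …, u_M ∈ D and any v ∈ D distinct from all u_i, one has the multiple-action formula a(v) ∏_{i=1}^M b(u_i) = (∏_{i=1}^M f(u_i,v)) (∏_{i=1}^M b(u_i)) a(v) + Σ_{i=1}^M g(v,u_i) (∏_{j≠i} f(u_j,u_i)) b(v) (∏_{j≠i} b(u_j)) a(u_i). -/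
/-!
Induction on `M`. Peel off `b(u₁)`, move `a(v)` past it by the exchange relation, and apply the
induction hypothesis to both `a(v)` and `a(u₁)` acting on the remaining product. The two
contributions ending in `a(uₖ)` (`k ≥ 2`) merge, after commuting `b(u₁)` with `b(v)`, into the
required term because of the three-term identity `f(x,w) g(w,y) + g(w,x) g(x,y) = g(w,y) f(x,y)`,
which for the rational `f`, `g` is a partial-fraction identity.
-/
open Finset

namespace MultipleAction

theorem prod_erase_zero {β : Type*} [CommMonoid β] {M : ℕ} (f : Fin (M + 1) → β) :
    ∏ j ∈ univ.erase 0, f j = ∏ j : Fin M, f j.succ := by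
  rw [← filter_ne', prod_filter, Fin.prod_univ_succ]
  simp [Fin.succ_ne_zero]

theorem prod_erase_succ {β : Type*} [CommMonoid β] {M : ℕ} (f : Fin (M + 1) → β)
    (k : Fin M) :
    ∏ j ∈ univ.erase k.succ, f j = f 0 * ∏ j ∈ univ.erase k, f j.succ := by
  simp only [← filter_ne', prod_filter, Fin.prod_univ_succ]
  simp [(Fin.succ_ne_zero k).symm]

theorem ofFn_prod_ite_zero {R : Type*} [Monoid R] {M : ℕ} (x : Fin (M + 1) → R) :
    (List.ofFn fun j => if j = 0 then 1 else x j).prod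
      = (List.ofFn fun j : Fin M => x j.succ).prod := by
  simp [List.ofFn_succ, Fin.succ_ne_zero]

theorem ofFn_prod_ite_succ {R : Type*} [Monoid R] {M : ℕ} (x : Fin (M + 1) → R) (k : Fin M) :
    (List.ofFn fun j => if j = k.succ then 1 else x j).prod
      = x 0 * (List.ofFn fun j => if j = k then 1 else x j.succ).prod := by
  simp [List.ofFn_succ, Fin.succ_inj, (Fin.succ_ne_zero k).symm]

section Exchange

variable {S R α : Type*} [CommRing S] [Ring R] [Algebra S R]
  {f g : α → α → S} {a b : α → R} {D : Set α}

theorem mul_ofFn_prod_of_exchange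
    (hbb : ∀ x ∈ D, ∀ y ∈ D, b x * b y = b y * b x)
    (hab : ∀ x ∈ D, ∀ y ∈ D, x ≠ y → a y * b x = f x y • (b x * a y) + g y x • (b y * a x))
    (hfg : ∀ x w y, x ≠ w → w ≠ y → x ≠ y → f x w * g w y + g w x * g x y = g w y * f x y)
    {M : ℕ} (u : Fin M → α) (hu : ∀ i, u i ∈ D) (huinj : Function.Injective u)
    (v : α) (hv : v ∈ D) (hvu : ∀ i, v ≠ u i) :
    a v * (List.ofFn fun i => b (u i)).prod =
      (∏ i, f (u i) v) • ((List.ofFn fun i => b (u i)).prod * a v)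
      + ∑ i, (g v (u i) * ∏ j ∈ univ.erase i, f (u j) (u i)) •
          (b v * (List.ofFn fun j => if j = i then 1 else b (u j)).prod * a (u i)) := by
  induction M generalizing v with
  | zero => simp
  | succ M ih =>
    have hu0 : ∀ i : Fin M, u 0 ≠ u i.succ := fun i h => Fin.succ_ne_zero i (huinj h).symm
    have ih' := ih (fun i => u i.succ) (fun i => hu i.succ) (huinj.comp (Fin.succ_injective M))
    have merge (k : Fin M) :
        (g v (u k.succ) * ∏ j ∈ univ.erase k.succ, f (u j) (u k.succ)) •
          (b v * (List.ofFn fun j => if j = k.succ then 1 else b (u j)).prod * a (u k.succ))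
        = f (u 0) v • (b (u 0) *
              ((g v (u k.succ) * ∏ j ∈ univ.erase k, f (u j.succ) (u k.succ)) •
                (b v * (List.ofFn fun j => if j = k then 1 else b (u j.succ)).prod * a (u k.succ))))
          + g v (u 0) • (b v *
              ((g (u 0) (u k.succ) * ∏ j ∈ univ.erase k, f (u j.succ) (u k.succ)) •
                (b (u 0) * (List.ofFn fun j => if j = k then 1 else b (u j.succ)).prod *
                  a (u k.succ)))) := by
      rw [prod_erase_succ, ofFn_prod_ite_succ]
      simp only [mul_smul_comm, smul_smul, ← mul_assoc, hbb _ (hu 0) _ hv, ← add_smul]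
      congr 1
      linear_combination -(∏ j ∈ univ.erase k, f (u j.succ) (u k.succ)) *
        hfg _ _ _ (hvu 0).symm (hvu k.succ) (hu0 k)
    rw [List.ofFn_succ, List.prod_cons, ← mul_assoc, hab _ (hu 0) _ hv (hvu 0).symm, add_mul,
      smul_mul_assoc, smul_mul_assoc, mul_assoc, mul_assoc, ih' v hv (fun i => hvu i.succ),
      ih' (u 0) (hu 0) hu0, Fin.prod_univ_succ, Fin.sum_univ_succ, ofFn_prod_ite_zero,
      prod_erase_zero, sum_congr rfl fun k _ => merge k, sum_add_distrib]
    simp only [mul_add, mul_sum, mul_smul_comm, smul_add, smul_sum, smul_smul, mul_assoc]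
    abel

end Exchange

theorem rational_exchange_identity {K : Type*} [Field K] (c x w y : K)
    (hxw : x ≠ w) (hwy : w ≠ y) (hxy : x ≠ y) :
    (x - w + c) / (x - w) * (c / (w - y)) + c / (w - x) * (c / (x - y))
      = c / (w - y) * ((x - y + c) / (x - y)) := by
  have : x - w ≠ 0 := sub_ne_zero.2 hxw
  have : w - y ≠ 0 := sub_ne_zero.2 hwy
  have : x - y ≠ 0 := sub_ne_zero.2 hxy
  have : w - x ≠ 0 := sub_ne_zero.2 hxw.symm
  field_simp
  ring

end MultipleAction

open Finset in
theorem multiple_action_same_first_index_general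
    {R : Type*} [Ring R] [Algebra ℂ R] (c : ℂ)
    (D : Set ℂ) (a b : ℂ → R)
    (hbb : ∀ u ∈ D, ∀ v ∈ D, b u * b v = b v * b u)
    (hab : ∀ u ∈ D, ∀ v ∈ D, u ≠ v →
      a v * b u = ((u - v + c) / (u - v)) • (b u * a v)
        + (c / (v - u)) • (b v * a u))
    (M : ℕ) (u : Fin M → ℂ) (hu : ∀ i, u i ∈ D) (huinj : Function.Injective u)
    (v : ℂ) (hv : v ∈ D) (hvu : ∀ i, v ≠ u i) :
    a v * (List.ofFn fun i => b (u i)).prod =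
      (∏ i, (u i - v + c) / (u i - v)) • ((List.ofFn fun i => b (u i)).prod * a v)
      + ∑ i, ((c / (v - u i)) * ∏ j ∈ univ.erase i, (u j - u i + c) / (u j - u i)) •
          (b v * (List.ofFn fun j => if j = i then (1 : R) else b (u j)).prod * a (u i)) :=
  MultipleAction.mul_ofFn_prod_of_exchange (f := fun x y => (x - y + c) / (x - y))
    (g := fun x y => c / (x - y)) hbb hab (MultipleAction.rational_exchange_identity c)
    u hu huinj v hv hvu

open Finset in
/-- First multiple-action formula of Appendix A: for operators `a`, `b` satisfying
`b(u)b(v) = b(v)b(u)` and `a(v)b(u) = f(u,v) b(u)a(v) + g(v,u) b(v)a(u)`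
(with `g(u,v) = c/(u-v)`, `f(u,v) = (u-v+c)/(u-v)`), the multiple action of `a(v)`
on a product of `b(u_i)`'s. -/
theorem multiple_action_same_first_index
    {R : Type*} [Ring R] [Algebra ℂ R] (c : ℂ) (hc : c ≠ 0)
    (D : Set ℂ) (a b : ℂ → R)
    (hbb : ∀ u ∈ D, ∀ v ∈ D, b u * b v = b v * b u)
    (hab : ∀ u ∈ D, ∀ v ∈ D, u ≠ v →
      a v * b u = ((u - v + c) / (u - v)) • (b u * a v)
        + (c / (v - u)) • (b v * a u))
    (M : ℕ) (u : Fin M → ℂ) (hu : ∀ i, u i ∈ D) (huinj : Function.Injective u)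
    (v : ℂ) (hv : v ∈ D) (hvu : ∀ i, v ≠ u i) :
    a v * (List.ofFn fun i => b (u i)).prod =
      (∏ i, (u i - v + c) / (u i - v)) • ((List.ofFn fun i => b (u i)).prod * a v)
      + ∑ i, ((c / (v - u i)) * ∏ j ∈ univ.erase i, (u j - u i + c) / (u j - u i)) •
          (b v * (List.ofFn fun j => if j = i then (1 : R) else b (u j)).prod * a (u i)) :=
  multiple_action_same_first_index_general c D a b hbb hab M u hu huinj v hv hvu
end

section
/- Let R be an associative unital ℂ-algebra and c ∈ ℂ nonzero. Suppose a, b : D → R (for a subset D ⊆ ℂ) satisfy b(u)b(v) = b(v)b(u) for all u, v ∈ D, and a(v)b(u) = f(v,u) b(u)a(v) + g(u,v) b(v)a(u) for all distinct u, v ∈ D. Then for any pairwise distinct u_1, …, u_M ∈ D and any v ∈ D distinct from all u_i, one has the multiple-action formula a(v) ∏_{i=1}^M b(u_i) = (∏_{i=1}^M f(v,u_i)) (∏_{i=1}^M b(u_i)) a(v) + Σ_{i=1}^M g(u_i,v) (∏_{j≠i} f(u_i,u_j)) b(v) (∏_{j≠i} b(u_j)) a(u_i). -/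
/-!
Induction on `M`, splitting off the first factor `b(u₀)`. Exchanging `a(v)` with `b(u₀)` yields
one term with `a(v)` and one with `a(u₀)`, and each is pushed through the remaining product by
the induction hypothesis. The terms ending in `a(uₖ)`, `k ≥ 1`, arise from both branches, and
their coefficients combine into the predicted one by the rational identity
`g(y,v) f(y,x) = f(v,x) g(y,v) + g(x,v) g(y,x)`.
-/

open Finset

theorem Fin.prod_univ_erase_zero {β : Type*} [CommMonoid β] {M : ℕ} (F : Fin (M + 1) → β) :
    ∏ j ∈ univ.erase 0, F j = ∏ j : Fin M, F j.succ := by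
  rw [univ_succ, Finset.erase_cons, Finset.prod_map]
  rfl

theorem Fin.prod_univ_erase_succ {β : Type*} [CommMonoid β] {M : ℕ}
    (F : Fin (M + 1) → β) (k : Fin M) :
    ∏ j ∈ univ.erase k.succ, F j = F 0 * ∏ j ∈ univ.erase k, F j.succ := by
  rw [univ_succ, erase_cons_of_ne _ (succ_ne_zero k).symm, Finset.prod_cons]
  erw [← map_erase (succEmb M), Finset.prod_map]
  rfl

namespace RationalExchange

variable {K : Type*} [Field K]

def f (c x y : K) : K := (x - y + c) / (x - y)

def g (c x y : K) : K := c / (x - y)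

theorem g_mul_f_eq {c v x y : K} (hvx : v ≠ x) (hvy : v ≠ y) (hxy : x ≠ y) :
    g c y v * f c y x = f c v x * g c y v + g c x v * g c y x := by
  have hvx' : v - x ≠ 0 := sub_ne_zero.2 hvx
  have hyv' : y - v ≠ 0 := sub_ne_zero.2 hvy.symm
  have hyx' : y - x ≠ 0 := sub_ne_zero.2 hxy.symm
  have hxv' : x - v ≠ 0 := sub_ne_zero.2 hvx.symm
  unfold f g
  field_simp
  ring

def actionCoeff (c v : K) {M : ℕ} (u : Fin M → K) (i : Fin M) : K :=
  g c (u i) v * ∏ j ∈ univ.erase i, f c (u i) (u j)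

theorem actionCoeff_cons_zero (c v x : K) {M : ℕ} (u : Fin M → K) :
    actionCoeff c v (Fin.cons x u) 0 = g c x v * ∏ k, f c x (u k) := by
  simp [actionCoeff, Fin.prod_univ_erase_zero]

theorem actionCoeff_cons_succ {c v x : K} {M : ℕ} {u : Fin M → K} {k : Fin M}
    (hvx : v ≠ x) (hvu : v ≠ u k) (hxu : x ≠ u k) :
    actionCoeff c v (Fin.cons x u) k.succ =
      f c v x * actionCoeff c v u k + g c x v * actionCoeff c x u k := by
  simp only [actionCoeff, Fin.prod_univ_erase_succ, Fin.cons_zero, Fin.cons_succ]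
  linear_combination (∏ j ∈ univ.erase k, f c (u k) (u j)) * g_mul_f_eq hvx hvu hxu

theorem mul_prod_ofFn {R : Type*} [Ring R] [Algebra K R] (c : K) {D : Set K} {a b : K → R}
    (hbb : ∀ u ∈ D, ∀ v ∈ D, b u * b v = b v * b u)
    (hab : ∀ u ∈ D, ∀ v ∈ D, u ≠ v → a v * b u = f c v u • (b u * a v) + g c u v • (b v * a u))
    {M : ℕ} (u : Fin M → K) (hu : ∀ i, u i ∈ D) (huinj : Function.Injective u)
    {v : K} (hv : v ∈ D) (hvu : ∀ i, v ≠ u i) :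
    a v * (List.ofFn fun i => b (u i)).prod =
      (∏ i, f c v (u i)) • ((List.ofFn fun i => b (u i)).prod * a v)
      + ∑ i, actionCoeff c v u i •
          (b v * (List.ofFn fun j => if j = i then (1 : R) else b (u j)).prod * a (u i)) := by
  induction M generalizing v with
  | zero => simp
  | succ M ih =>
    obtain ⟨x, u, rfl⟩ : ∃ x u', u = Fin.cons x u' := ⟨_, _, (Fin.cons_self_tail u).symm⟩
    have hx : x ∈ D := hu 0
    have hvx : v ≠ x := hvu 0
    have hxu : ∀ k, x ≠ u k := fun k h => Fin.succ_ne_zero k (@huinj 0 k.succ h).symm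
    have hu' : ∀ k, u k ∈ D := fun k => hu k.succ
    have huinj' : Function.Injective u := fun k l h => Fin.succ_injective _ (@huinj k.succ l.succ h)
    have ihv := ih u hu' huinj' hv fun k => hvu k.succ
    have ihx := ih u hu' huinj' hx hxu
    have hcoeff : ∀ k, actionCoeff c v (Fin.cons x u) k.succ =
        f c v x * actionCoeff c v u k + g c x v * actionCoeff c x u k := fun k =>
      actionCoeff_cons_succ hvx (hvu k.succ) (hxu k)
    simp only [List.ofFn_succ, List.prod_cons, Fin.cons_zero, Fin.cons_succ, Fin.prod_univ_succ,
      Fin.sum_univ_succ, actionCoeff_cons_zero, hcoeff, Fin.succ_ne_zero,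
      fun k : Fin M => (Fin.succ_ne_zero k).symm, Fin.succ_inj, if_true, if_false, one_mul]
    rw [← mul_assoc, hab x hx v hv hvx.symm, add_mul, smul_mul_assoc, smul_mul_assoc, mul_assoc,
      mul_assoc, ihv, ihx]
    simp only [mul_add, smul_add, mul_sum, smul_sum, add_smul, sum_add_distrib, mul_smul_comm,
      smul_smul, ← mul_assoc, hbb x hx v hv]
    abel

end RationalExchange

open Finset in
theorem multiple_action_same_second_index_general
    {R : Type*} [Ring R] [Algebra ℂ R] (c : ℂ)
    (D : Set ℂ) (a b : ℂ → R)
    (hbb : ∀ u ∈ D, ∀ v ∈ D, b u * b v = b v * b u)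
    (hab : ∀ u ∈ D, ∀ v ∈ D, u ≠ v →
      a v * b u = ((v - u + c) / (v - u)) • (b u * a v)
        + (c / (u - v)) • (b v * a u))
    (M : ℕ) (u : Fin M → ℂ) (hu : ∀ i, u i ∈ D) (huinj : Function.Injective u)
    (v : ℂ) (hv : v ∈ D) (hvu : ∀ i, v ≠ u i) :
    a v * (List.ofFn fun i => b (u i)).prod =
      (∏ i, (v - u i + c) / (v - u i)) • ((List.ofFn fun i => b (u i)).prod * a v)
      + ∑ i, ((c / (u i - v)) * ∏ j ∈ univ.erase i, (u i - u j + c) / (u i - u j)) •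
          (b v * (List.ofFn fun j => if j = i then (1 : R) else b (u j)).prod * a (u i)) :=
  RationalExchange.mul_prod_ofFn c hbb hab u hu huinj hv hvu

open Finset in
/-- Second multiple-action formula of Appendix A: for operators `a`, `b` satisfying
`b(u)b(v) = b(v)b(u)` and `a(v)b(u) = f(v,u) b(u)a(v) + g(u,v) b(v)a(u)`
(with `g(u,v) = c/(u-v)`, `f(u,v) = (u-v+c)/(u-v)`), the multiple action of `a(v)`
on a product of `b(u_i)`'s. -/
theorem multiple_action_same_second_index
    {R : Type*} [Ring R] [Algebra ℂ R] (c : ℂ) (hc : c ≠ 0)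
    (D : Set ℂ) (a b : ℂ → R)
    (hbb : ∀ u ∈ D, ∀ v ∈ D, b u * b v = b v * b u)
    (hab : ∀ u ∈ D, ∀ v ∈ D, u ≠ v →
      a v * b u = ((v - u + c) / (v - u)) • (b u * a v)
        + (c / (u - v)) • (b v * a u))
    (M : ℕ) (u : Fin M → ℂ) (hu : ∀ i, u i ∈ D) (huinj : Function.Injective u)
    (v : ℂ) (hv : v ∈ D) (hvu : ∀ i, v ≠ u i) :
    a v * (List.ofFn fun i => b (u i)).prod =
      (∏ i, (v - u i + c) / (v - u i)) • ((List.ofFn fun i => b (u i)).prod * a v)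
      + ∑ i, ((c / (u i - v)) * ∏ j ∈ univ.erase i, (u i - u j + c) / (u i - u j)) •
          (b v * (List.ofFn fun j => if j = i then (1 : R) else b (u j)).prod * a (u i)) :=
  multiple_action_same_second_index_general c D a b hbb hab M u hu huinj v hv hvu
end

section
/- Fix c ∈ ℂ nonzero, N ∈ ℕ, θ_1, …, θ_N ∈ ℂ, positive half-integers s_1, …, s_N, and set S = Σ_{i=1}^N 2s_i. Let κ, κ̃ ∈ ℂ with κ̃ ≠ κ. Let u_1, …, u_M and v_1, …, v_{M̂} be complex numbers, q_+(z) = ∏_{i=1}^M (z−u_i)/c, q_-(z) = ∏_{i=1}^{M̂} (z−v_i)/c, and suppose there is a function Λ_d : ℂ → ℂ such that for all z ∈ ℂ: Λ_d(z) q_+(z) = κ̃ λ_1(z) q_+(z−c) + κ λ_2(z) q_+(z+c) and Λ_d(z) q_-(z) = κ λ_1(z) q_-(z−c) + κ̃ λ_2(z) q_-(z+c). Then M + M̂ = S and the quantum Wronskian identity κ̃ q_+(z−c) q_-(z) − κ q_+(z) q_-(z−c) = (κ̃−κ) λ(z) holds for all z ∈ ℂ; i.e., W_d(z) := (κ̃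 q_+(z−c) q_-(z) − κ q_+(z) q_-(z−c))/λ(z) is the constant κ̃−κ. -/
/-!
Eliminating `Λ_d` from the two T-Q equations shows that the quantum Wronskian `W` satisfies
`λ₁(z) W(z) = λ₂(z) W(z + c)`, the first-order difference equation that `λ` satisfies too.
Two polynomial solutions of such an equation, the second one nonzero, are proportional: their
ratio is `c`-periodic, hence constant on the infinite set `z₀ + ℕ c`. Comparing degrees and
leading coefficients in `W = k λ` gives `M + M̂ = S` and `k = κ̃ - κ`.
-/

open Polynomial Finset Lagrange

section Telescope

variable {M : Type*} [CommMonoid M]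

theorem Finset.prod_Icc_one_eq_prod_range (f : ℕ → M) (m : ℕ) :
    ∏ k ∈ Icc 1 m, f k = ∏ k ∈ range m, f (k + 1) := by
  rw [← Ico_add_one_right_eq_Icc, range_eq_Ico, prod_Ico_add' f 0 m 1]

theorem Finset.mul_prod_Icc_one_eq_mul_prod_range (f : ℕ → M) (m : ℕ) :
    f 0 * ∏ k ∈ Icc 1 m, f k = f m * ∏ k ∈ range m, f k := by
  rw [prod_Icc_one_eq_prod_range, mul_comm, ← prod_range_succ', prod_range_succ, mul_comm]

end Telescope

theorem lambda_telescope_single_site {K : Type*} [Field K] (c θ σ z : K) (m : ℕ)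
    (hσ : 2 * σ = m) :
    (z - θ + c * (σ + 1 / 2)) / c * ∏ k ∈ Icc 1 m, (z - θ + c * (σ - (k : K) + 1 / 2)) / c
      = (z - θ - c * (σ - 1 / 2)) / c *
          ∏ k ∈ Icc 1 m, (z + c - θ + c * (σ - (k : K) + 1 / 2)) / c := by
  have h := mul_prod_Icc_one_eq_mul_prod_range
    (fun k : ℕ => (z - θ + c * (σ - (k : K) + 1 / 2)) / c) m
  rw [prod_Icc_one_eq_prod_range fun k : ℕ => (z + c - θ + c * (σ - (k : K) + 1 / 2)) / c]
  convert h using 2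
  · simp
  · rw [← hσ]; ring
  · refine prod_congr rfl fun k _ => ?_
    push_cast; ring

section ScaledNodal

variable {K ι : Type*} [Field K] (c : K) (s : Finset ι) (r : ι → K)

noncomputable def scaledNodal : K[X] := C (c⁻¹ ^ #s) * nodal s r

theorem eval_scaledNodal (z : K) : (scaledNodal c s r).eval z = ∏ i ∈ s, (z - r i) / c := by
  simp only [scaledNodal, eval_mul, eval_C, eval_nodal, div_eq_mul_inv, prod_mul_distrib,
    prod_const, mul_comm]

variable {c}

theorem natDegree_scaledNodal (hc : c ≠ 0) : (scaledNodal c s r).natDegree = #s := by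
  rw [scaledNodal, natDegree_C_mul (pow_ne_zero _ (inv_ne_zero hc)), natDegree_nodal]

theorem leadingCoeff_scaledNodal : (scaledNodal c s r).leadingCoeff = c⁻¹ ^ #s := by
  rw [scaledNodal, leadingCoeff_mul, leadingCoeff_C, nodal_monic.leadingCoeff, mul_one]

theorem scaledNodal_ne_zero (hc : c ≠ 0) : scaledNodal c s r ≠ 0 :=
  mul_ne_zero (C_ne_zero.mpr (pow_ne_zero _ (inv_ne_zero hc))) nodal_ne_zero

end ScaledNodal

section Wronskian

variable {R : Type*} [CommRing R] (κt κ c : R) (f g : R[X])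

noncomputable def qWronskian : R[X] := C κt * taylor (-c) f * g - C κ * f * taylor (-c) g

theorem eval_qWronskian (z : R) : (qWronskian κt κ c f g).eval z
    = κt * f.eval (z - c) * g.eval z - κ * f.eval z * g.eval (z - c) := by
  simp only [qWronskian, eval_sub, eval_mul, eval_C, taylor_eval, ← sub_eq_add_neg]

theorem natDegree_qWronskian_le :
    (qWronskian κt κ c f g).natDegree ≤ f.natDegree + g.natDegree := by
  refine (natDegree_sub_le _ _).trans (max_le ?_ ?_) <;>
    refine (natDegree_mul_le).trans ?_ <;>
    grw [natDegree_C_mul_le, natDegree_taylor]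

theorem coeff_qWronskian_natDegree_add :
    (qWronskian κt κ c f g).coeff (f.natDegree + g.natDegree)
      = (κt - κ) * f.leadingCoeff * g.leadingCoeff := by
  have hf := coeff_mul_degree_add_degree (taylor (-c) f) g
  have hg := coeff_mul_degree_add_degree f (taylor (-c) g)
  rw [natDegree_taylor, leadingCoeff_taylor] at hf hg
  rw [qWronskian, mul_assoc, mul_assoc, coeff_sub, coeff_C_mul, coeff_C_mul, hf, hg]
  ring

variable [IsDomain R] {κt κ f g}

theorem natDegree_qWronskian (hκ : κt ≠ κ) (hf : f ≠ 0) (hg : g ≠ 0) :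
    (qWronskian κt κ c f g).natDegree = f.natDegree + g.natDegree := by
  refine natDegree_eq_of_le_of_coeff_ne_zero (natDegree_qWronskian_le ..) ?_
  rw [coeff_qWronskian_natDegree_add]
  exact mul_ne_zero (mul_ne_zero (sub_ne_zero.mpr hκ) (leadingCoeff_ne_zero.mpr hf))
    (leadingCoeff_ne_zero.mpr hg)

theorem leadingCoeff_qWronskian (hκ : κt ≠ κ) (hf : f ≠ 0) (hg : g ≠ 0) :
    (qWronskian κt κ c f g).leadingCoeff = (κt - κ) * f.leadingCoeff * g.leadingCoeff := by
  rw [leadingCoeff, natDegree_qWronskian c hκ hf hg, coeff_qWronskian_natDegree_add]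

end Wronskian

section Shift

variable {R : Type*} [CommRing R] [IsDomain R] {a b p q : R[X]} {c : R}

theorem taylor_mul_eq_mul_taylor_of_mul_eq_mul_taylor (hb : b ≠ 0)
    (hp : a * p = b * taylor c p) (hq : a * q = b * taylor c q) :
    taylor c q * p = q * taylor c p :=
  mul_left_cancel₀ hb (by linear_combination q * hp - p * hq)

theorem taylor_nsmul_mul_eq_mul_taylor_nsmul (hq : q ≠ 0)
    (h : taylor c q * p = q * taylor c p) (n : ℕ) :
    taylor (n • c) q * p = q * taylor (n • c) p := by
  induction n with
  | zero => simp
  | succ n ih =>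
    have hshift : taylor ((n + 1) • c) q * taylor (n • c) p
        = taylor (n • c) q * taylor ((n + 1) • c) p := by
      simpa only [taylor_mul, taylor_taylor, succ_nsmul] using congrArg (taylor (n • c)) h
    refine mul_left_cancel₀ (fun h0 => hq ((taylor_eq_zero (n • c) q).mp h0)) ?_
    linear_combination taylor ((n + 1) • c) q * ih + q * hshift

end Shift

theorem exists_eq_C_mul_of_taylor_mul_eq_mul_taylor {K : Type*} [Field K] [CharZero K]
    {c : K} (hc : c ≠ 0) {p q : K[X]} (hq : q ≠ 0) (h : taylor c q * p = q * taylor c p) :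
    ∃ a, p = C a * q := by
  obtain ⟨z, hz⟩ := (finite_setOfPred_isRoot hq).infinite_compl.nonempty
  replace hz : q.eval z ≠ 0 := hz
  refine ⟨p.eval z / q.eval z, ?_⟩
  suffices C (q.eval z) * p - C (p.eval z) * q = 0 by
    refine mul_left_cancel₀ (C_ne_zero.mpr hz) ?_
    rw [← mul_assoc, ← C_mul, mul_div_cancel₀ _ hz, ← sub_eq_zero, this]
  refine eq_zero_of_infinite_isRoot _ (Set.infinite_of_injective_forall_mem
    (f := fun n : ℕ => z + n • c) ?_ fun n => ?_)
  · intro m n hmn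
    simpa [hc] using hmn
  · have := congrArg (eval z) (taylor_nsmul_mul_eq_mul_taylor_nsmul hq h n)
    simp only [eval_mul, taylor_eval] at this
    simp only [Set.mem_ofPred_eq, IsRoot, eval_sub, eval_mul, eval_C]
    linear_combination -this

theorem card_add_card_eq_of_qWronskian_eq_C_mul {K ι ι' ι'' : Type*} [Field K] {κt κ c k : K}
    (hc : c ≠ 0) (hκ : κt ≠ κ) {s : Finset ι} {t : Finset ι'} {s' : Finset ι''}
    {u : ι → K} {v : ι' → K} {r : ι'' → K}
    (h : qWronskian κt κ c (scaledNodal c s u) (scaledNodal c t v) = C k * scaledNodal c s' r) :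
    #s + #t = #s' ∧ k = κt - κ := by
  have hu := scaledNodal_ne_zero s u hc
  have hv := scaledNodal_ne_zero t v hc
  have hlc := congrArg leadingCoeff h
  rw [leadingCoeff_qWronskian c hκ hu hv, leadingCoeff_mul, leadingCoeff_C,
    leadingCoeff_scaledNodal, leadingCoeff_scaledNodal, leadingCoeff_scaledNodal, mul_assoc,
    ← pow_add] at hlc
  have hk : k ≠ 0 := by
    rintro rfl
    simp [sub_eq_zero, hκ, hc] at hlc
  have hcard : #s + #t = #s' := by
    simpa [natDegree_qWronskian c hκ hu hv, natDegree_scaledNodal _ _ hc, natDegree_C_mul hk]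
      using congrArg natDegree h
  rw [hcard] at hlc
  exact ⟨hcard, (mul_right_cancel₀ (pow_ne_zero _ (inv_ne_zero hc)) hlc).symm⟩

theorem quantum_Wronskian_diagonal_general (c : ℂ) (hc : c ≠ 0) (N : ℕ) (θ : Fin N → ℂ)
    (s : Fin N → ℂ) (m : Fin N → ℕ)
    (hs : ∀ i, 2 * s i = (m i : ℂ))
    (κ κt : ℂ) (hκ : κt ≠ κ)
    (M Mh : ℕ) (u : Fin M → ℂ) (v : Fin Mh → ℂ)
    (lam1 lam2 lam qp qm : ℂ → ℂ)
    (hlam1 : ∀ z, lam1 z = ∏ i, (z - θ i + c * (s i + 1 / 2)) / c)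
    (hlam2 : ∀ z, lam2 z = ∏ i, (z - θ i - c * (s i - 1 / 2)) / c)
    (hlam : ∀ z, lam z =
      ∏ i, ∏ k ∈ Finset.Icc 1 (m i), (z - θ i + c * (s i - (k : ℂ) + 1 / 2)) / c)
    (hqp : ∀ z, qp z = ∏ i, (z - u i) / c)
    (hqm : ∀ z, qm z = ∏ i, (z - v i) / c)
    (Λd : ℂ → ℂ)
    (hTQp : ∀ z, Λd z * qp z = κt * lam1 z * qp (z - c) + κ * lam2 z * qp (z + c))
    (hTQm : ∀ z, Λd z * qm z = κ * lam1 z * qm (z - c) + κt * lam2 z * qm (z + c)) :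
    M + Mh = ∑ i, m i ∧
      ∀ z, κt * qp (z - c) * qm z - κ * qp z * qm (z - c) = (κt - κ) * lam z := by
  set Qp := scaledNodal c univ u
  set Qm := scaledNodal c univ v
  set L1 := scaledNodal c univ fun i => θ i - c * (s i + 1 / 2)
  set L2 := scaledNodal c univ fun i => θ i + c * (s i - 1 / 2)
  set L := scaledNodal c (univ.sigma fun i => Icc 1 (m i))
    fun x => θ x.1 - c * (s x.1 - (x.2 : ℂ) + 1 / 2)
  set W := qWronskian κt κ c Qp Qm
  have hW (z : ℂ) : W.eval z = κt * qp (z - c) * qm z - κ * qp z * qm (z - c) := by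
    simp only [W, eval_qWronskian, Qp, Qm, eval_scaledNodal, hqp, hqm]
  have hL (z : ℂ) : L.eval z = lam z := by
    rw [eval_scaledNodal, prod_sigma, hlam]
    exact prod_congr rfl fun i _ => prod_congr rfl fun k _ => by ring
  have hL1 (z : ℂ) : L1.eval z = lam1 z := by
    rw [eval_scaledNodal, hlam1]; exact prod_congr rfl fun i _ => by ring
  have hL2 (z : ℂ) : L2.eval z = lam2 z := by
    rw [eval_scaledNodal, hlam2]; exact prod_congr rfl fun i _ => by ring
  have hWshift : L1 * W = L2 * taylor c W := Polynomial.funext fun z => by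
    simp only [eval_mul, taylor_eval, hW, hL1, hL2, add_sub_cancel_right]
    linear_combination qp z * hTQm z - qm z * hTQp z
  have hLshift : L1 * L = L2 * taylor c L := Polynomial.funext fun z => by
    simp only [eval_mul, taylor_eval, hL, hL1, hL2, hlam1, hlam2, hlam, ← prod_mul_distrib]
    exact prod_congr rfl fun i _ => lambda_telescope_single_site c (θ i) (s i) z (m i) (hs i)
  obtain ⟨k, hk⟩ := exists_eq_C_mul_of_taylor_mul_eq_mul_taylor hc (scaledNodal_ne_zero _ _ hc)
    (taylor_mul_eq_mul_taylor_of_mul_eq_mul_taylor (scaledNodal_ne_zero _ _ hc) hWshift hLshift)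
  obtain ⟨hdeg, rfl⟩ := card_add_card_eq_of_qWronskian_eq_C_mul hc hκ hk
  refine ⟨by simpa using hdeg, fun z => ?_⟩
  rw [← hW, hk, eval_mul, eval_C, hL]

/-- Quantum Wronskian for the diagonally twisted XXX chain: if the two Baxter
Q-polynomials `q₊`, `q₋` solve the two Baxter T-Q equations for a common
eigenvalue `Λ_d`, then `M + M̂ = S = Σ 2sᵢ` and
`κ̃ q₊(z-c) q₋(z) - κ q₊(z) q₋(z-c) = (κ̃-κ) λ(z)` for all `z`. -/
theorem quantum_Wronskian_diagonal (c : ℂ) (hc : c ≠ 0) (N : ℕ) (θ : Fin N → ℂ)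
    (s : Fin N → ℂ) (m : Fin N → ℕ) (hm : ∀ i, 0 < m i)
    (hs : ∀ i, 2 * s i = (m i : ℂ))
    (κ κt : ℂ) (hκ : κt ≠ κ)
    (M Mh : ℕ) (u : Fin M → ℂ) (v : Fin Mh → ℂ)
    (lam1 lam2 lam qp qm : ℂ → ℂ)
    (hlam1 : ∀ z, lam1 z = ∏ i, (z - θ i + c * (s i + 1 / 2)) / c)
    (hlam2 : ∀ z, lam2 z = ∏ i, (z - θ i - c * (s i - 1 / 2)) / c)
    (hlam : ∀ z, lam z =
      ∏ i, ∏ k ∈ Finset.Icc 1 (m i), (z - θ i + c * (s i - (k : ℂ) + 1 / 2)) / c)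
    (hqp : ∀ z, qp z = ∏ i, (z - u i) / c)
    (hqm : ∀ z, qm z = ∏ i, (z - v i) / c)
    (Λd : ℂ → ℂ)
    (hTQp : ∀ z, Λd z * qp z = κt * lam1 z * qp (z - c) + κ * lam2 z * qp (z + c))
    (hTQm : ∀ z, Λd z * qm z = κ * lam1 z * qm (z - c) + κt * lam2 z * qm (z + c)) :
    M + Mh = ∑ i, m i ∧
      ∀ z, κt * qp (z - c) * qm z - κ * qp z * qm (z - c) = (κt - κ) * lam z :=
  quantum_Wronskian_diagonal_general c hc N θ s m hs κ κt hκ M Mh u v lam1 lam2 lam qp qm hlam1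
    hlam2 hlam hqp hqm Λd hTQp hTQm
end

section
/- Let κ, κ̃, κ⁺, κ⁻, ρ_1, ρ_2 ∈ ℂ with κ⁺κ⁻ ≠ 0 and ρ_1ρ_2 ≠ κ⁺κ⁻, and set μ = 1/(1 − ρ_1ρ_2/(κ⁺κ⁻)). Let σ ∈ ℂ with σ² = μ, and define the 2×2 complex matrices A = σ·[[1, ρ_2/κ⁻],[ρ_1/κ⁺, 1]], B = σ·[[1, ρ_1/κ⁻],[ρ_2/κ⁺, 1]], D = diag(κ̃−ρ_1, κ−ρ_2), K = [[κ̃, κ⁺],[κ⁻, κ]]. If the constraint κ⁺κ⁻ − (ρ_1 κ + ρ_2 κ̃) + ρ_1ρ_2 = 0 holds, then B D A = K. -/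
/-- The scalar `1 - ρ₁ρ₂/(κ⁺κ⁻)` is `1/μ`, which the factor `σ² = μ` cancels. -/
theorem twist_mul_diag_mul_eq_smul {F : Type*} [Field F] {κ κt κp κm ρ1 ρ2 : F}
    (hp : κp ≠ 0) (hm : κm ≠ 0)
    (hconstraint : κp * κm - (ρ1 * κ + ρ2 * κt) + ρ1 * ρ2 = 0) :
    !![(1 : F), ρ1 / κm; ρ2 / κp, 1] * !![κt - ρ1, 0; 0, κ - ρ2] *
        !![(1 : F), ρ2 / κm; ρ1 / κp, 1]
      = (1 - ρ1 * ρ2 / (κp * κm)) • !![κt, κp; κm, κ] := by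
  ext i j
  fin_cases i <;> fin_cases j <;>
    simp only [Matrix.mul_apply, Fin.sum_univ_two, Matrix.smul_apply, Matrix.of_apply,
      Matrix.cons_val', Matrix.cons_val_zero, Matrix.cons_val_one, Matrix.empty_val',
      Matrix.cons_val_fin_one, smul_eq_mul, Fin.zero_eta, Fin.mk_one] <;>
    field_simp
  · linear_combination (-ρ1) * hconstraint
  · linear_combination (-κm) * hconstraint
  · linear_combination (-κp) * hconstraint
  · linear_combination (-ρ2) * hconstraint

/-- Factorization of the generic twist matrix `K = [[κ̃, κ⁺],[κ⁻, κ]]` as `K = B D A`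
with diagonal `D = diag(κ̃-ρ₁, κ-ρ₂)`, provided the constraint
`κ⁺κ⁻ - (ρ₁κ + ρ₂κ̃) + ρ₁ρ₂ = 0` holds. Here `σ² = μ = 1/(1 - ρ₁ρ₂/(κ⁺κ⁻))`. -/
theorem twist_factorization (κ κt κp κm ρ1 ρ2 μ σ : ℂ)
    (hκ : κp * κm ≠ 0) (hρ : ρ1 * ρ2 ≠ κp * κm)
    (hμ : μ = 1 / (1 - ρ1 * ρ2 / (κp * κm))) (hσ : σ ^ 2 = μ)
    (hconstraint : κp * κm - (ρ1 * κ + ρ2 * κt) + ρ1 * ρ2 = 0) :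
    (σ • !![(1 : ℂ), ρ1 / κm; ρ2 / κp, 1]) * !![κt - ρ1, 0; 0, κ - ρ2] *
        (σ • !![(1 : ℂ), ρ2 / κm; ρ1 / κp, 1])
      = !![κt, κp; κm, κ] := by
  have hμ_mul : μ * (1 - ρ1 * ρ2 / (κp * κm)) = 1 := by
    have hne : 1 - ρ1 * ρ2 / (κp * κm) ≠ 0 :=
      sub_ne_zero.mpr (Ne.symm ((div_eq_one_iff_eq hκ).not.mpr hρ))
    rw [hμ, one_div, inv_mul_cancel₀ hne]
  calc _ = σ ^ 2 • (!![(1 : ℂ), ρ1 / κm; ρ2 / κp, 1] * !![κt - ρ1, 0; 0, κ - ρ2] *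
          !![(1 : ℂ), ρ2 / κm; ρ1 / κp, 1]) := by
        rw [Matrix.smul_mul, Matrix.smul_mul, Matrix.mul_smul, smul_smul, sq]
    _ = (μ * (1 - ρ1 * ρ2 / (κp * κm))) • !![κt, κp; κm, κ] := by
        rw [twist_mul_diag_mul_eq_smul (left_ne_zero_of_mul hκ) (right_ne_zero_of_mul hκ)
          hconstraint, smul_smul, hσ]
    _ = !![κt, κp; κm, κ] := by rw [hμ_mul, one_smul]
end

section
/- Let V be a ℂ-vector space, t_{11}, t_{12}, t_{21}, t_{22} : D → End(V) (D ⊆ ℂ), |0⟩ ∈ V, and λ_1, λ_2 : D → ℂ with t_{11}(z)|0⟩ = λ_1(z)|0⟩, t_{22}(z)|0⟩ = λ_2(z)|0⟩, and t_{21}(z)|0⟩ = 0 for all z ∈ D. Let κ⁺, κ⁻, ρ_1, ρ_2 ∈ ℂ with κ⁺κ⁻ ≠ 0, ρ_1ρ_2 ≠ κ⁺κ⁻, μ = 1/(1 − ρ_1ρ_2/(κ⁺κ⁻)), and define the modified operators ν_{11}(z) = μ(t_{11}(z) + (ρ_2/κ⁺)t_{12}(z) + (ρ_2/κ⁻)t_{21}(z)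 + (ρ_2²/(κ⁻κ⁺))t_{22}(z)), ν_{22}(z) = μ(t_{22}(z) + (ρ_1/κ⁺)t_{12}(z) + (ρ_1/κ⁻)t_{21}(z) + (ρ_1²/(κ⁻κ⁺))t_{11}(z)), ν_{12}(z) = μ(t_{12}(z) + (ρ_1/κ⁻)t_{11}(z) + (ρ_2/κ⁻)t_{22}(z) + (ρ_1ρ_2/(κ⁻)²)t_{21}(z)), ν_{21}(z) = μ(t_{21}(z) + (ρ_1/κ⁺)t_{11}(z) + (ρ_2/κ⁺)t_{22}(z) + (ρ_1ρ_2/(κ⁺)²)t_{12}(z)). Then for all z ∈ D: ν_{11}(z)|0⟩ = λ_1(z)|0⟩ + (ρ_2/κ⁺) ν_{12}(z)|0⟩; ν_{22}(z)|0⟩ = λ_2(z)|0⟩ + (ρ_1/κ⁺) ν_{12}(z)|0⟩; ν_{21}(z)|0⟩ = ((ρ_1/κ⁺)λ_1(z) + (ρ_2/κ⁺)λ_2(z))|0⟩ + (ρ_1ρ_2/(κ⁺)²) ν_{12}(z)|0⟩. -/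
/-! On `|0⟩` the operators `t₁₁, t₂₂, t₂₁` act by scalars, so every `ν(z)|0⟩` lies in the span of
`|0⟩` and `t₁₂(z)|0⟩`. Subtracting the stated multiple of `ν₁₂(z)|0⟩` removes the `t₁₂(z)|0⟩`
component, and what remains of the `|0⟩` component is a multiple of `μ (1 - ρ₁ρ₂/(κ⁺κ⁻)) = 1`. -/

lemma one_sub_div_ne_zero_of_ne {K : Type*} [DivisionRing K] {a b : K} (h : a ≠ b) :
    1 - a / b ≠ 0 := by
  rcases eq_or_ne b 0 with rfl | hb
  · simp
  · rw [sub_ne_zero, ne_comm, Ne, div_eq_one_iff_eq hb]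
    exact h

lemma smul_add_smul_eq_of_mul_sub_mul_eq {R M : Type*} [CommRing R] [AddCommGroup M] [Module R M]
    {μ α α' γ δ : R} (v w : M) (h : μ * (α - δ * α') = γ) :
    μ • (α • v + δ • w) = γ • v + δ • μ • (α' • v + w) := by
  rw [← h]
  module

theorem modified_operators_on_highest_weight_general
    {V : Type*} [AddCommGroup V] [Module ℂ V]
    (D : Set ℂ) (t11 t12 t21 t22 : ℂ → Module.End ℂ V)
    (vac : V) (lam1 lam2 : ℂ → ℂ)
    (hvac1 : ∀ z ∈ D, t11 z vac = lam1 z • vac)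
    (hvac2 : ∀ z ∈ D, t22 z vac = lam2 z • vac)
    (hvac3 : ∀ z ∈ D, t21 z vac = 0)
    (κp κm ρ1 ρ2 μ : ℂ) (hρ : ρ1 * ρ2 ≠ κp * κm)
    (hμ : μ = 1 / (1 - ρ1 * ρ2 / (κp * κm)))
    (ν11 ν22 ν12 ν21 : ℂ → Module.End ℂ V)
    (hν11 : ∀ z, ν11 z = μ • (t11 z + (ρ2 / κp) • t12 z + (ρ2 / κm) • t21 z
        + (ρ2 ^ 2 / (κm * κp)) • t22 z))
    (hν22 : ∀ z, ν22 z = μ • (t22 z + (ρ1 / κp) • t12 z + (ρ1 / κm) • t21 z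
        + (ρ1 ^ 2 / (κm * κp)) • t11 z))
    (hν12 : ∀ z, ν12 z = μ • (t12 z + (ρ1 / κm) • t11 z + (ρ2 / κm) • t22 z
        + (ρ1 * ρ2 / κm ^ 2) • t21 z))
    (hν21 : ∀ z, ν21 z = μ • (t21 z + (ρ1 / κp) • t11 z + (ρ2 / κp) • t22 z
        + (ρ1 * ρ2 / κp ^ 2) • t12 z)) :
    ∀ z ∈ D,
      ν11 z vac = lam1 z • vac + (ρ2 / κp) • (ν12 z vac) ∧
      ν22 z vac = lam2 z • vac + (ρ1 / κp) • (ν12 z vac) ∧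
      ν21 z vac = ((ρ1 / κp) * lam1 z + (ρ2 / κp) * lam2 z) • vac
        + (ρ1 * ρ2 / κp ^ 2) • (ν12 z vac) := by
  intro z hz
  have hμ_mul : μ * (1 - ρ1 * ρ2 / (κp * κm)) = 1 :=
    hμ ▸ one_div_mul_cancel (one_sub_div_ne_zero_of_ne hρ)
  set w := t12 z vac
  have hν11_vac :
      ν11 z vac = μ • ((lam1 z + ρ2 ^ 2 / (κm * κp) * lam2 z) • vac + (ρ2 / κp) • w) := by
    simp only [hν11, LinearMap.smul_apply, LinearMap.add_apply, hvac1 z hz, hvac2 z hz, hvac3 z hz]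
    module
  have hν22_vac :
      ν22 z vac = μ • ((lam2 z + ρ1 ^ 2 / (κm * κp) * lam1 z) • vac + (ρ1 / κp) • w) := by
    simp only [hν22, LinearMap.smul_apply, LinearMap.add_apply, hvac1 z hz, hvac2 z hz, hvac3 z hz]
    module
  have hν12_vac : ν12 z vac = μ • ((ρ1 / κm * lam1 z + ρ2 / κm * lam2 z) • vac + w) := by
    simp only [hν12, LinearMap.smul_apply, LinearMap.add_apply, hvac1 z hz, hvac2 z hz, hvac3 z hz]
    module
  have hν21_vac : ν21 z vac =
      μ • ((ρ1 / κp * lam1 z + ρ2 / κp * lam2 z) • vac + (ρ1 * ρ2 / κp ^ 2) • w) := by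
    simp only [hν21, LinearMap.smul_apply, LinearMap.add_apply, hvac1 z hz, hvac2 z hz, hvac3 z hz]
    module
  rw [hν11_vac, hν22_vac, hν21_vac, hν12_vac]
  refine ⟨?_, ?_, ?_⟩ <;> apply smul_add_smul_eq_of_mul_sub_mul_eq
  · linear_combination lam1 z * hμ_mul
  · linear_combination lam2 z * hμ_mul
  · linear_combination (ρ1 / κp * lam1 z + ρ2 / κp * lam2 z) * hμ_mul

/-- Action of the modified operators on the highest weight vector `|0⟩`:
with `ν₁₂` as modified creation operator,
`ν₁₁(z)|0⟩ = λ₁(z)|0⟩ + (ρ₂/κ⁺) ν₁₂(z)|0⟩`,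
`ν₂₂(z)|0⟩ = λ₂(z)|0⟩ + (ρ₁/κ⁺) ν₁₂(z)|0⟩`, and
`ν₂₁(z)|0⟩ = ((ρ₁/κ⁺)λ₁(z) + (ρ₂/κ⁺)λ₂(z))|0⟩ + (ρ₁ρ₂/(κ⁺)²) ν₁₂(z)|0⟩`. -/
theorem modified_operators_on_highest_weight
    {V : Type*} [AddCommGroup V] [Module ℂ V]
    (D : Set ℂ) (t11 t12 t21 t22 : ℂ → Module.End ℂ V)
    (vac : V) (lam1 lam2 : ℂ → ℂ)
    (hvac1 : ∀ z ∈ D, t11 z vac = lam1 z • vac)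
    (hvac2 : ∀ z ∈ D, t22 z vac = lam2 z • vac)
    (hvac3 : ∀ z ∈ D, t21 z vac = 0)
    (κp κm ρ1 ρ2 μ : ℂ) (hκ : κp * κm ≠ 0) (hρ : ρ1 * ρ2 ≠ κp * κm)
    (hμ : μ = 1 / (1 - ρ1 * ρ2 / (κp * κm)))
    (ν11 ν22 ν12 ν21 : ℂ → Module.End ℂ V)
    (hν11 : ∀ z, ν11 z = μ • (t11 z + (ρ2 / κp) • t12 z + (ρ2 / κm) • t21 z
        + (ρ2 ^ 2 / (κm * κp)) • t22 z))
    (hν22 : ∀ z, ν22 z = μ • (t22 z + (ρ1 / κp) • t12 z + (ρ1 / κm) • t21 z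
        + (ρ1 ^ 2 / (κm * κp)) • t11 z))
    (hν12 : ∀ z, ν12 z = μ • (t12 z + (ρ1 / κm) • t11 z + (ρ2 / κm) • t22 z
        + (ρ1 * ρ2 / κm ^ 2) • t21 z))
    (hν21 : ∀ z, ν21 z = μ • (t21 z + (ρ1 / κp) • t11 z + (ρ2 / κp) • t22 z
        + (ρ1 * ρ2 / κp ^ 2) • t12 z)) :
    ∀ z ∈ D,
      ν11 z vac = lam1 z • vac + (ρ2 / κp) • (ν12 z vac) ∧
      ν22 z vac = lam2 z • vac + (ρ1 / κp) • (ν12 z vac) ∧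
      ν21 z vac = ((ρ1 / κp) * lam1 z + (ρ2 / κp) * lam2 z) • vac
        + (ρ1 * ρ2 / κp ^ 2) • (ν12 z vac) :=
  modified_operators_on_highest_weight_general D t11 t12 t21 t22 vac lam1 lam2 hvac1 hvac2 hvac3 κp
    κm ρ1 ρ2 μ hρ hμ ν11 ν22 ν12 ν21 hν11 hν22 hν12 hν21
end

section
/- Let V be a ℂ-vector space and t_{11}, t_{12}, t_{21}, t_{22} : D → End(V) (D ⊆ ℂ). Let κ, κ̃, κ⁺, κ⁻, ρ_1, ρ_2 ∈ ℂ with κ⁺κ⁻ ≠ 0, ρ_1ρ_2 ≠ κ⁺κ⁻, μ = 1/(1 − ρ_1ρ_2/(κ⁺κ⁻)), and define ν_{12}(z) = μ(t_{12}(z) + (ρ_1/κ⁻)t_{11}(z) + (ρ_2/κ⁻)t_{22}(z) + (ρ_1ρ_2/(κ⁻)²)t_{21}(z)), ν_{21}(z) = μ(t_{21}(z) + (ρ_1/κ⁺)t_{11}(z) + (ρ_2/κ⁺)t_{22}(z) + (ρ_1ρ_2/(κ⁺)²)t_{12}(z)), and t(z) = κ̃ t_{11}(z) + κ t_{22}(z)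 + κ⁺ t_{21}(z) + κ⁻ t_{12}(z). (i) If |0⟩ ∈ V and λ_1, λ_2 : D → ℂ satisfy t_{11}(z)|0⟩ = λ_1(z)|0⟩, t_{22}(z)|0⟩ = λ_2(z)|0⟩, t_{21}(z)|0⟩ = 0, then t(z)|0⟩ = ((κ̃−ρ_1)λ_1(z) + (κ−ρ_2)λ_2(z))|0⟩ + (κ⁻/μ) ν_{12}(z)|0⟩. (ii) If |0̂⟩ ∈ V satisfies t_{11}(z)|0̂⟩ = λ_2(z)|0̂⟩, t_{22}(z)|0̂⟩ = λ_1(z)|0̂⟩, t_{12}(z)|0̂⟩ = 0, then t(z)|0̂⟩ = ((κ̃−ρ_1)λ_2(z) + (κ−ρ_2)λ_1(z))|0̂⟩ + (κ⁺/μ) ν_{21}(z)|0̂⟩. -/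
/-!
Modulo `t₂₁`, the twisted transfer matrix is `(κ̃ - ρ₁) t₁₁ + (κ - ρ₂) t₂₂ + (κ⁻/μ) ν₁₂`:
the `t₁₁`, `t₂₂` parts of `κ⁻ ν₁₂ / μ` are `ρ₁ t₁₁ + ρ₂ t₂₂`, and what is left over is a
multiple of `t₂₁`, which kills the highest weight vector. Exchanging `t₁₂ ↔ t₂₁` and
`κ⁺ ↔ κ⁻` gives the lowest weight case.
-/

section TwistedTransferMatrix

variable {K V : Type*} [Field K] [AddCommGroup V] [Module K V]

theorem twisted_eq_deformed (A B X Y : Module.End K V) (κt κ p m ρ1 ρ2 μ : K)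
    (hm : m ≠ 0) (hμ : μ ≠ 0) :
    κt • A + κ • B + p • Y + m • X =
      (κt - ρ1) • A + (κ - ρ2) • B + (p - ρ1 * ρ2 / m) • Y
        + (m / μ) • μ • (X + (ρ1 / m) • A + (ρ2 / m) • B + (ρ1 * ρ2 / m ^ 2) • Y) := by
  match_scalars <;> field_simp <;> ring

theorem twisted_apply_of_weight_vector {A B X Y : Module.End K V} {v : V} {a b : K}
    (κt κ p m ρ1 ρ2 μ : K) (hm : m ≠ 0) (hμ : μ ≠ 0)
    (hA : A v = a • v) (hB : B v = b • v) (hY : Y v = 0) :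
    (κt • A + κ • B + p • Y + m • X) v =
      ((κt - ρ1) * a + (κ - ρ2) * b) • v
        + (m / μ) • (μ • (X + (ρ1 / m) • A + (ρ2 / m) • B + (ρ1 * ρ2 / m ^ 2) • Y)) v := by
  rw [twisted_eq_deformed A B X Y κt κ p m ρ1 ρ2 μ hm hμ]
  simp only [LinearMap.add_apply, LinearMap.smul_apply, hA, hB, hY, smul_zero, add_zero,
    smul_smul, ← add_smul, sub_mul]

end TwistedTransferMatrix

/-- Deformed action of the non-diagonally twisted transfer matrix
`t(z) = κ̃ t₁₁(z) + κ t₂₂(z) + κ⁺ t₂₁(z) + κ⁻ t₁₂(z)` on the highest and lowest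
weight vectors, in terms of the modified creation operators `ν₁₂`, `ν₂₁`. -/
theorem twisted_transfer_matrix_on_weight_vectors
    {V : Type*} [AddCommGroup V] [Module ℂ V]
    (D : Set ℂ) (t11 t12 t21 t22 : ℂ → Module.End ℂ V)
    (κ κt κp κm ρ1 ρ2 μ : ℂ) (hκ : κp * κm ≠ 0) (hρ : ρ1 * ρ2 ≠ κp * κm)
    (hμ : μ = 1 / (1 - ρ1 * ρ2 / (κp * κm)))
    (ν12 ν21 : ℂ → Module.End ℂ V)
    (hν12 : ∀ z, ν12 z = μ • (t12 z + (ρ1 / κm) • t11 z + (ρ2 / κm) • t22 z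
        + (ρ1 * ρ2 / κm ^ 2) • t21 z))
    (hν21 : ∀ z, ν21 z = μ • (t21 z + (ρ1 / κp) • t11 z + (ρ2 / κp) • t22 z
        + (ρ1 * ρ2 / κp ^ 2) • t12 z))
    (t : ℂ → Module.End ℂ V)
    (ht : ∀ z, t z = κt • t11 z + κ • t22 z + κp • t21 z + κm • t12 z)
    (lam1 lam2 : ℂ → ℂ) :
    (∀ vac : V, (∀ z ∈ D, t11 z vac = lam1 z • vac) →
      (∀ z ∈ D, t22 z vac = lam2 z • vac) → (∀ z ∈ D, t21 z vac = 0) →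
      ∀ z ∈ D, t z vac = ((κt - ρ1) * lam1 z + (κ - ρ2) * lam2 z) • vac
        + (κm / μ) • (ν12 z vac)) ∧
    (∀ vach : V, (∀ z ∈ D, t11 z vach = lam2 z • vach) →
      (∀ z ∈ D, t22 z vach = lam1 z • vach) → (∀ z ∈ D, t12 z vach = 0) →
      ∀ z ∈ D, t z vach = ((κt - ρ1) * lam2 z + (κ - ρ2) * lam1 z) • vach
        + (κp / μ) • (ν21 z vach)) := by
  have hκp : κp ≠ 0 := left_ne_zero_of_mul hκ
  have hκm : κm ≠ 0 := right_ne_zero_of_mul hκ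
  have hμ0 : μ ≠ 0 :=
    hμ ▸ one_div_ne_zero (sub_ne_zero.2 fun h => hρ ((div_eq_one_iff_eq hκ).1 h.symm))
  refine ⟨fun vac h11 h22 h21 z hz => ?_, fun vach h11 h22 h12 z hz => ?_⟩
  · rw [ht, hν12]
    exact twisted_apply_of_weight_vector κt κ κp κm ρ1 ρ2 μ hκm hμ0
      (h11 z hz) (h22 z hz) (h21 z hz)
  · rw [ht, hν21, add_right_comm _ (κp • t21 z)]
    exact twisted_apply_of_weight_vector κt κ κm κp ρ1 ρ2 μ hκp hμ0
      (h11 z hz) (h22 z hz) (h12 z hz)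
end

section
/- Let V be a ℂ-vector space, c ∈ ℂ nonzero, S ∈ ℕ, τ ∈ ℂ nonzero, and F : ℂ → ℂ a polynomial. Let ν : ℂ → End(V) satisfy ν(z)ν(w) = ν(w)ν(z) for all z, w, and suppose there exist P_0, …, P_S ∈ End(V) with P_S = (τ c^S)^{−1}·id such that, setting P(z) = Σ_{k=0}^S P_k z^k, one has P(z)ν(w) = ν(w)P(z) for all z, w and ν(z)P(z) = F(z)·id for all z ∈ ℂ. Then for any pairwise distinct u_1, …, u_S ∈ ℂ and any z ∈ ℂ with z ≠ u_i for all i: ν(z) ∏_{i=1}^S ν(u_i) = τ ( F(z) g(z,ū) ∏_{i=1}^S ν(u_i) + Σ_{i=1}^S g(u_i,z) F(u_i) g(u_i,ū_i) ν(z) ∏_{j≠i} ν(u_j) ). -/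
/-!
`P(z)` is a polynomial of degree `S` whose leading coefficient `(τ c^S)⁻¹` is a scalar, so
Lagrange interpolation at the `S` nodes `uᵢ` gives
`P(z) = Σᵢ Lᵢ(z) P(uᵢ) + (τ c^S)⁻¹ ∏ᵢ (z - uᵢ) = Σᵢ Lᵢ(z) P(uᵢ) + (τ g(z,ū))⁻¹`.
Multiplying by `ν(z) ∏ⱼ ν(uⱼ)` and letting `P(uᵢ)` absorb the factor `ν(uᵢ)` into `F(uᵢ)`
gives a linear relation between `ν(z) ∏ⱼ ν(uⱼ)`, `F(z) ∏ⱼ ν(uⱼ)` and the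
`ν(z) ∏_{j≠i} ν(uⱼ)`. Solving it for the first term gives the identity, because
`g(z,ū) Lᵢ(z) = -g(uᵢ,z) g(uᵢ,ūᵢ)`.
-/

open Finset Polynomial

theorem List.prod_ofFn_eq_mul_prod_ofFn_ite {M : Type*} [Monoid M] {n : ℕ} (f : Fin n → M)
    (hf : _root_.Pairwise fun a b => Commute (f a) (f b)) (i : Fin n) :
    (List.ofFn f).prod = f i * (List.ofFn fun j => if j = i then 1 else f j).prod := by
  induction n with
  | zero => exact i.elim0
  | succ n ih =>
    simp only [List.ofFn_succ, List.prod_cons]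
    induction i using Fin.cases with
    | zero => simp [Fin.succ_ne_zero]
    | succ i =>
      simp only [Fin.succ_inj, (Fin.succ_ne_zero i).symm, if_false]
      rw [ih (fun j => f j.succ) (fun a b hab => hf (Fin.succ_injective _ |>.ne hab)) i,
        (hf (Fin.succ_ne_zero i).symm).left_comm]

namespace Lagrange

section Interpolation

variable {K : Type*} [Field K] {ι : Type*} [DecidableEq ι] {s : Finset ι} {v : ι → K}

theorem eq_interpolate_add_C_coeff_mul_nodal (hvs : Set.InjOn v s) {f : K[X]}
    (hf : f.degree ≤ #s) :
    f = interpolate s v (fun i => f.eval (v i)) + C (f.coeff #s) * nodal s v := by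
  rw [← sub_eq_iff_eq_add]
  refine eq_interpolate_of_eval_eq _ hvs ?_ fun i hi => ?_
  · rw [degree_lt_iff_coeff_zero]
    intro m hm
    rw [coeff_sub, coeff_C_mul]
    rcases hm.eq_or_lt with rfl | hlt
    · rw [← natDegree_nodal (v := v), nodal_monic.coeff_natDegree, mul_one, sub_self]
    · have hfm : f.coeff m = 0 :=
        coeff_eq_zero_of_degree_lt (hf.trans_lt (by exact_mod_cast hlt))
      have hnm : (nodal s v).coeff m = 0 :=
        coeff_eq_zero_of_natDegree_lt (natDegree_nodal (v := v) ▸ hlt)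
      rw [hfm, hnm, mul_zero, sub_zero]
  · rw [eval_sub, eval_mul, eval_nodal_at_node hi, mul_zero, sub_zero]

theorem sum_pow_smul_eq_sum_basis_smul_add_nodal_smul {M : Type*} [AddCommGroup M]
    [Module K M] {S : ℕ} (P : Fin (S + 1) → M) {u : Fin S → K} (hu : Function.Injective u)
    (z : K) :
    ∑ k : Fin (S + 1), z ^ (k : ℕ) • P k =
      ∑ i, (Lagrange.basis univ u i).eval z • ∑ k : Fin (S + 1), u i ^ (k : ℕ) • P k
        + (nodal univ u).eval z • P (Fin.last S) := by
  have hpow : ∀ k : Fin (S + 1), z ^ (k : ℕ) =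
      ∑ i, u i ^ (k : ℕ) * (Lagrange.basis univ u i).eval z
        + (if k = Fin.last S then (nodal univ u).eval z else 0) := by
    intro k
    have hk : ((X : K[X]) ^ (k : ℕ)).degree ≤ #(univ : Finset (Fin S)) := by
      rw [degree_X_pow, card_univ, Fintype.card_fin]
      exact_mod_cast k.is_le
    have := congrArg (eval z) (eq_interpolate_add_C_coeff_mul_nodal hu.injOn hk)
    simpa [interpolate_apply, eval_finsetSum, coeff_X_pow, Fin.ext_iff, eq_comm,
      apply_ite (eval z)] using this
  simp_rw [hpow, add_smul, sum_add_distrib, sum_smul, ite_smul, zero_smul, sum_ite_eq',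
    mem_univ, if_true, smul_sum, smul_smul]
  rw [sum_comm]
  simp_rw [mul_comm]

end Interpolation

section Weights

variable {K : Type*} [Field K] {ι : Type*} [Fintype ι]

theorem prod_div_sub_mul_eval_nodal (c : K) {z : K} {u : ι → K} (hz : ∀ j, z ≠ u j) :
    (∏ j, c / (z - u j)) * (nodal univ u).eval z = c ^ Fintype.card ι := by
  rw [eval_nodal, ← prod_mul_distrib, ← card_univ, ← prod_const]
  exact prod_congr rfl fun j _ => div_mul_cancel₀ c (sub_ne_zero.2 (hz j))

theorem prod_div_sub_mul_eval_basis [DecidableEq ι] (c : K) {z : K} {u : ι → K}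
    (hz : ∀ j, z ≠ u j) (i : ι) :
    (∏ j, c / (z - u j)) * (Lagrange.basis univ u i).eval z =
      c / (z - u i) * ∏ j ∈ univ.erase i, c / (u i - u j) := by
  rw [← mul_prod_erase univ _ (mem_univ i), Lagrange.basis, eval_prod, mul_assoc,
    ← prod_mul_distrib]
  congr 1
  refine prod_congr rfl fun j _ => ?_
  have := sub_ne_zero.2 (hz j)
  simp only [basisDivisor, eval_mul, eval_C, eval_sub, eval_X]
  field_simp

end Weights

end Lagrange

theorem smul_mul_eq_of_interpolation {K A ι : Type*} [Field K] [Ring A] [Algebra K A]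
    [Fintype ι] {ν p : K → A} {f : K → K}
    (hcomm : ∀ w x, p w * ν x = ν x * p w) (hinv : ∀ w, ν w * p w = f w • 1)
    {z b : K} {u L : ι → K} (hp : p z = ∑ i, L i • p (u i) + b • 1)
    {Q : A} {Q' : ι → A} (hQ : ∀ i, Q = ν (u i) * Q' i) :
    f z • Q = ∑ i, (L i * f (u i)) • (ν z * Q' i) + b • (ν z * Q) := by
  have hpν : ∀ w, p w * ν w = f w • 1 := fun w => (hcomm w w).trans (hinv w)
  calc f z • Q = p z * (ν z * Q) := by rw [← mul_assoc, hpν, smul_mul_assoc, one_mul]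
    _ = ∑ i, L i • (ν z * (p (u i) * ν (u i)) * Q' i) + b • (ν z * Q) := by
        rw [hp, add_mul, smul_mul_assoc, one_mul, sum_mul]
        refine congrArg (· + _) (sum_congr rfl fun i _ => ?_)
        rw [smul_mul_assoc, hQ i, ← mul_assoc, hcomm, mul_assoc, mul_assoc, mul_assoc]
    _ = _ := by simp_rw [hpν, mul_smul_comm, mul_one, smul_mul_assoc, smul_smul]

open Finset in
/-- Abstract form of the multiple-product identity for a null twisted transfer
matrix `ν(z)` (Theorem on the product of `S+1` operators `ν`): if the commuting
family `ν` admits a commuting operator-valued polynomial inverse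
`P(z) = Σ_{k=0}^S P_k z^k` with `P_S = (τ c^S)⁻¹·id` and `ν(z)P(z) = F(z)·id`,
then `ν(z) ∏ᵢ ν(uᵢ) = τ (F(z) g(z,ū) ∏ᵢ ν(uᵢ) + Σᵢ g(uᵢ,z) F(uᵢ) g(uᵢ,ūᵢ) ν(z) ∏_{j≠i} ν(uⱼ))`
for pairwise distinct `u₁,…,u_S` and `z` away from them, where `g(u,v) = c/(u-v)`. -/
theorem null_transfer_matrix_multiple_product
    {V : Type*} [AddCommGroup V] [Module ℂ V]
    (c : ℂ) (hc : c ≠ 0) (S : ℕ) (τ : ℂ) (hτ : τ ≠ 0) (F : Polynomial ℂ)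
    (ν : ℂ → Module.End ℂ V)
    (hνν : ∀ z w, ν z * ν w = ν w * ν z)
    (P : Fin (S + 1) → Module.End ℂ V)
    (hPS : P (Fin.last S) = (τ * c ^ S)⁻¹ • (1 : Module.End ℂ V))
    (hPν : ∀ z w : ℂ, (∑ k : Fin (S + 1), z ^ (k : ℕ) • P k) * ν w = ν w * (∑ k : Fin (S + 1), z ^ (k : ℕ) • P k))
    (hνP : ∀ z : ℂ, ν z * (∑ k : Fin (S + 1), z ^ (k : ℕ) • P k) = F.eval z • (1 : Module.End ℂ V))
    (u : Fin S → ℂ) (huinj : Function.Injective u)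
    (z : ℂ) (hzu : ∀ i, z ≠ u i) :
    ν z * (List.ofFn fun i => ν (u i)).prod =
      τ • ((F.eval z * ∏ i, c / (z - u i)) • (List.ofFn fun i => ν (u i)).prod
        + ∑ i, ((c / (u i - z)) * F.eval (u i) * ∏ j ∈ univ.erase i, c / (u i - u j)) •
            (ν z * (List.ofFn fun j => if j = i then (1 : Module.End ℂ V) else ν (u j)).prod)) := by
  set Q := (List.ofFn fun i => ν (u i)).prod
  set g := ∏ i, c / (z - u i)
  set L : Fin S → ℂ := fun i => (Lagrange.basis univ u i).eval z
  set b := (Lagrange.nodal univ u).eval z * (τ * c ^ S)⁻¹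
  have hinterp : (∑ k : Fin (S + 1), z ^ (k : ℕ) • P k) =
      ∑ i, L i • ∑ k : Fin (S + 1), u i ^ (k : ℕ) • P k + b • 1 := by
    rw [Lagrange.sum_pow_smul_eq_sum_basis_smul_add_nodal_smul P huinj z, hPS, smul_smul]
  have hgb : τ * g * b = 1 := by
    have hnodal : g * (Lagrange.nodal univ u).eval z = c ^ S := by
      rw [Lagrange.prod_div_sub_mul_eval_nodal c hzu, Fintype.card_fin]
    calc τ * g * b = τ * (g * (Lagrange.nodal univ u).eval z) * (τ * c ^ S)⁻¹ := by ring
      _ = 1 := by rw [hnodal, mul_inv_cancel₀ (mul_ne_zero hτ (pow_ne_zero S hc))]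
  have key := smul_mul_eq_of_interpolation hPν hνP hinterp
    (List.prod_ofFn_eq_mul_prod_ofFn_ite _ fun a b _ => hνν (u a) (u b))
  have hcoeff : ∀ i, c / (u i - z) * F.eval (u i) * ∏ j ∈ univ.erase i, c / (u i - u j)
      = -g * (L i * F.eval (u i)) := fun i => by
    rw [neg_mul, ← mul_assoc, Lagrange.prod_div_sub_mul_eval_basis c hzu, ← neg_div_neg_eq,
      neg_sub]
    ring
  simp_rw [hcoeff, ← smul_smul (-g), ← smul_sum]
  linear_combination (norm := module) -(τ * g) • key - hgb • (ν z * Q)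
end

section
/- Let V be a ℂ-vector space, c ∈ ℂ nonzero, S ∈ ℕ, and let λ_1, λ_2, F : ℂ → ℂ be functions and κ, κ̃, κ⁻, ρ_1, ρ_2, μ ∈ ℂ with μ ≠ 0. Let t, ν_{12} : ℂ → End(V), |0⟩ ∈ V, and let u_1, …, u_S ∈ ℂ be pairwise distinct and z ∈ ℂ with z ≠ u_i for all i. Assume: (a) the off-shell action t(z) ν_{12}(ū)|0⟩ = (κ⁻/μ) ν_{12}(z) ν_{12}(ū)|0⟩ + Λ_1(z,ū) ν_{12}(ū)|0⟩ + Σ_{i=1}^S g(u_i,z) E_1(u_i,ū_i) ν_{12}(z) ν_{12}(ū_i)|0⟩, where Λ_1(z,ū) = (κ̃−ρ_1)λ_1(z) f(ū,z) + (κ−ρ_2)λ_2(z) f(z,ū) and E_1(u_i,ū_i) = (κ−ρ_2)λ_2(u_i) f(u_i,ū_i) − (κ̃−ρ_1)λ_1(u_i) f(ū_i,u_i); and (b) the operator identity (κ⁻/μ) ν_{12}(z) ν_{12}(ū) = (ρ_1+ρ_2)( F(z) g(z,ū) ν_{12}(ū) + Σ_{i=1}^S g(u_i,z) F(u_i) g(u_i,ū_i)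 ν_{12}(z) ν_{12}(ū_i) ). Then t(z) ν_{12}(ū)|0⟩ = Λ(z,ū) ν_{12}(ū)|0⟩ + Σ_{i=1}^S g(u_i,z) E(u_i,ū_i) ν_{12}(z) ν_{12}(ū_i)|0⟩, where Λ(z,ū) = Λ_1(z,ū) + (ρ_1+ρ_2) F(z) g(z,ū) and E(u_i,ū_i) = E_1(u_i,ū_i) + (ρ_1+ρ_2) F(u_i) g(u_i,ū_i). In particular, if the inhomogeneous Bethe equations E(u_i,ū_i) = 0 hold for all i = 1, …, S, then ν_{12}(ū)|0⟩ is an eigenvector of t(z) with eigenvalue Λ(z,ū). -/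
/-!
Applied to `|0⟩`, the multiple-product identity (b) rewrites the unwanted term
`(κ⁻/μ) ν₁₂(z) ν₁₂(ū)|0⟩` of the off-shell action (a) as a combination of `ν₁₂(ū)|0⟩` and the
vectors `ν₁₂(z) ν₁₂(ūᵢ)|0⟩`; substituting it shifts `Λ₁` and `E₁` by the `F`-terms.
-/

theorem absorb_smul_add_sum_smul {R M ι : Type*} [CommSemiring R] [AddCommMonoid M] [Module R M]
    [Fintype ι] {x y v : M} {w : ι → M} {Λ φ r : R} {g e f : ι → R}
    (hx : x = y + Λ • v + ∑ i, (g i * e i) • w i)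
    (hy : y = r • (φ • v + ∑ i, (g i * f i) • w i)) :
    x = (Λ + r * φ) • v + ∑ i, (g i * (e i + r * f i)) • w i := by
  have hsum : ∑ i, (g i * (e i + r * f i)) • w i
      = ∑ i, (g i * e i) • w i + r • ∑ i, (g i * f i) • w i := by
    rw [Finset.smul_sum, ← Finset.sum_add_distrib]
    refine Finset.sum_congr rfl fun i _ => ?_
    rw [smul_smul, ← add_smul, mul_add, mul_left_comm]
  rw [hx, hy, hsum, smul_add, add_smul, mul_smul]
  abel

open Finset in
theorem MABA_spectral_theorem_general
    {V : Type*} [AddCommGroup V] [Module ℂ V]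
    (c : ℂ) (S : ℕ)
    (F : ℂ → ℂ) (κm ρ1 ρ2 μ : ℂ)
    (t ν12 : ℂ → Module.End ℂ V) (vac : V)
    (u : Fin S → ℂ)
    (z : ℂ)
    (B : Module.End ℂ V)
    (Bsub : Fin S → Module.End ℂ V)
    (Λ1 : ℂ)
    (E1 : Fin S → ℂ)
    (ha : t z (B vac) = (κm / μ) • (ν12 z (B vac)) + Λ1 • (B vac)
      + ∑ i, ((c / (u i - z)) * E1 i) • (ν12 z (Bsub i vac)))
    (hb : (κm / μ) • (ν12 z * B) = (ρ1 + ρ2) •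
      ((F z * ∏ i, c / (z - u i)) • B
        + ∑ i, ((c / (u i - z)) * F (u i) * ∏ j ∈ univ.erase i, c / (u i - u j)) •
            (ν12 z * Bsub i))) :
    t z (B vac) = (Λ1 + (ρ1 + ρ2) * (F z * ∏ i, c / (z - u i))) • (B vac)
      + ∑ i, ((c / (u i - z)) *
          (E1 i + (ρ1 + ρ2) * (F (u i) * ∏ j ∈ univ.erase i, c / (u i - u j)))) •
            (ν12 z (Bsub i vac)) ∧
    ((∀ i, E1 i + (ρ1 + ρ2) * (F (u i) * ∏ j ∈ univ.erase i, c / (u i - u j)) = 0) →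
      t z (B vac) = (Λ1 + (ρ1 + ρ2) * (F z * ∏ i, c / (z - u i))) • (B vac)) := by
  have hb_vac := LinearMap.congr_fun hb vac
  simp only [LinearMap.smul_apply, LinearMap.add_apply, LinearMap.sum_apply,
    Module.End.mul_apply, mul_assoc] at hb_vac
  have action := absorb_smul_add_sum_smul ha hb_vac
  refine ⟨action, fun bethe => ?_⟩
  simpa only [bethe, mul_zero, zero_smul, sum_const_zero, add_zero] using action

open Finset in
/-- Main spectral theorem of the modified algebraic Bethe ansatz for the twisted XXX
chain: combining (a) the off-shell action of the twisted transfer matrix `t(z)` on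
the modified Bethe vector `ν₁₂(ū)|0⟩` with (b) the multiple-product identity for the
null twisted transfer matrix `ν₁₂`, yields the action
`t(z) ν₁₂(ū)|0⟩ = Λ(z,ū) ν₁₂(ū)|0⟩ + Σᵢ g(uᵢ,z) E(uᵢ,ūᵢ) ν₁₂(z) ν₁₂(ūᵢ)|0⟩`;
when the inhomogeneous Bethe equations hold, `ν₁₂(ū)|0⟩` is an eigenvector. -/
theorem MABA_spectral_theorem
    {V : Type*} [AddCommGroup V] [Module ℂ V]
    (c : ℂ) (hc : c ≠ 0) (S : ℕ)
    (lam1 lam2 F : ℂ → ℂ) (κ κt κm ρ1 ρ2 μ : ℂ) (hμ : μ ≠ 0)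
    (t ν12 : ℂ → Module.End ℂ V) (vac : V)
    (u : Fin S → ℂ) (huinj : Function.Injective u)
    (z : ℂ) (hzu : ∀ i, z ≠ u i)
    (B : Module.End ℂ V) (hB : B = (List.ofFn fun i => ν12 (u i)).prod)
    (Bsub : Fin S → Module.End ℂ V)
    (hBsub : ∀ i, Bsub i =
      (List.ofFn fun j => if j = i then (1 : Module.End ℂ V) else ν12 (u j)).prod)
    (Λ1 : ℂ) (hΛ1 : Λ1 = (κt - ρ1) * lam1 z * (∏ i, (u i - z + c) / (u i - z))
      + (κ - ρ2) * lam2 z * (∏ i, (z - u i + c) / (z - u i)))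
    (E1 : Fin S → ℂ)
    (hE1 : ∀ i, E1 i =
      (κ - ρ2) * lam2 (u i) * (∏ j ∈ univ.erase i, (u i - u j + c) / (u i - u j))
      - (κt - ρ1) * lam1 (u i) * (∏ j ∈ univ.erase i, (u j - u i + c) / (u j - u i)))
    (ha : t z (B vac) = (κm / μ) • (ν12 z (B vac)) + Λ1 • (B vac)
      + ∑ i, ((c / (u i - z)) * E1 i) • (ν12 z (Bsub i vac)))
    (hb : (κm / μ) • (ν12 z * B) = (ρ1 + ρ2) •
      ((F z * ∏ i, c / (z - u i)) • B
        + ∑ i, ((c / (u i - z)) * F (u i) * ∏ j ∈ univ.erase i, c / (u i - u j)) •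
            (ν12 z * Bsub i))) :
    t z (B vac) = (Λ1 + (ρ1 + ρ2) * (F z * ∏ i, c / (z - u i))) • (B vac)
      + ∑ i, ((c / (u i - z)) *
          (E1 i + (ρ1 + ρ2) * (F (u i) * ∏ j ∈ univ.erase i, c / (u i - u j)))) •
            (ν12 z (Bsub i vac)) ∧
    ((∀ i, E1 i + (ρ1 + ρ2) * (F (u i) * ∏ j ∈ univ.erase i, c / (u i - u j)) = 0) →
      t z (B vac) = (Λ1 + (ρ1 + ρ2) * (F z * ∏ i, c / (z - u i))) • (B vac)) :=
  MABA_spectral_theorem_general c S F κm ρ1 ρ2 μ t ν12 vac u z B Bsub Λ1 E1 ha hb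
end

section
/- Fix c ∈ ℂ nonzero, N ∈ ℕ, θ_1, …, θ_N ∈ ℂ, positive half-integers s_1, …, s_N, and set S = Σ_{i=1}^N 2s_i. Let κ, κ̃, ρ_1, ρ_2 ∈ ℂ. Let u_1, …, u_S and v_1, …, v_S be complex numbers, Q⁺(z) = ∏_{i=1}^S (z−u_i)/c, Q⁻(z) = ∏_{i=1}^S (z−v_i)/c, and suppose there is a function Λ : ℂ → ℂ such that for all z ∈ ℂ: Λ(z) Q⁺(z) = (κ̃−ρ_1) λ_1(z) Q⁺(z−c) + (κ−ρ_2) λ_2(z) Q⁺(z+c) + (ρ_1+ρ_2) F(z) and Λ(z) Q⁻(z) = (κ−ρ_2) λ_1(z) Q⁻(z−c) + (κ̃−ρ_1) λ_2(z) Q⁻(z+c) + (ρ_1+ρ_2) F(z). Then the modified quantum Wronskian equation holds for all z ∈ ℂ: λ(z+c)·[(κ̃−ρ_1) Q⁺(z−c) Q⁻(z) − (κ−ρ_2) Q⁺(z) Q⁻(z−c)] − λ(z)·[(κ̃−ρ_1) Q⁺(z) Q⁻(z+c) − (κ−ρ_2) Q⁺(z+c) Q⁻(z)] = (ρ_1+ρ_2)(Q⁺(z)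 − Q⁻(z)) λ(z) λ(z+c); equivalently, with W(z) = ((κ̃−ρ_1)Q⁺(z−c)Q⁻(z) − (κ−ρ_2)Q⁺(z)Q⁻(z−c))/λ(z), one has W(z) − W(z+c) = (ρ_1+ρ_2)(Q⁺(z) − Q⁻(z)). -/
/-!
Both sides of the modified Wronskian are divisible by the common core `P` of `λ(z)` and
`λ(z + c)`: per site, `λ(z)` runs over the factors `k = 1, …, 2s`, `λ(z + c)` over
`k = 0, …, 2s - 1`, and `F(z)` over `k = 0, …, 2s`, so with `P` the product over
`k = 1, …, 2s - 1` one has `λ(z) = λ₂(z) P(z)`, `λ(z + c) = λ₁(z) P(z)` and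
`F(z) = λ₁(z) λ₂(z) P(z)`. After these substitutions the Wronskian is `P(z)` times the
combination `Q⁺(z)·(T-Q for Q⁻) - Q⁻(z)·(T-Q for Q⁺)`, in which `Λ` cancels.
-/

open Finset

namespace Finset

variable {M : Type*} [CommMonoid M]

theorem prod_Icc_zero_eq_mul (f : ℕ → M) (n : ℕ) :
    ∏ k ∈ Icc 0 n, f k = f 0 * ∏ k ∈ Icc 1 n, f k := by
  rw [← insert_Icc_add_one_left_eq_Icc n.zero_le, prod_insert (by simp), zero_add]

theorem prod_Icc_one_eq_prod_Icc_pred_mul (f : ℕ → M) {m : ℕ} (hm : 0 < m) :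
    ∏ k ∈ Icc 1 m, f k = (∏ k ∈ Icc 1 (m - 1), f k) * f m := by
  obtain ⟨n, rfl⟩ := Nat.exists_eq_add_one_of_ne_zero hm.ne'
  exact prod_Icc_succ_top (by omega) f

theorem prod_Icc_one_eq_prod_Icc_zero_pred (f : ℕ → M) {m : ℕ} (hm : 0 < m) :
    ∏ k ∈ Icc 1 m, f k = ∏ k ∈ Icc 0 (m - 1), f (k + 1) := by
  obtain ⟨n, rfl⟩ := Nat.exists_eq_add_one_of_ne_zero hm.ne'
  rw [Nat.add_sub_cancel, ← map_add_right_Icc 0 n 1, prod_map]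
  rfl

end Finset

/-- The `k`-th factor of `λ` at a site with inhomogeneity `θ` and spin `s`: the factor
`k = 0` is the site's factor of `λ₁`, and for `2s = m` the factor `k = m` is that of `λ₂`. -/
noncomputable def spinFactor (c θ s : ℂ) (k : ℕ) (z : ℂ) : ℂ :=
  (z - θ + c * (s - k + 1 / 2)) / c

theorem spinFactor_zero (c θ s z : ℂ) :
    spinFactor c θ s 0 z = (z - θ + c * (s + 1 / 2)) / c := by
  simp [spinFactor]

theorem spinFactor_of_two_mul_eq {c θ s : ℂ} {m : ℕ} (hs : 2 * s = m) (z : ℂ) :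
    spinFactor c θ s m z = (z - θ - c * (s - 1 / 2)) / c := by
  unfold spinFactor
  congr 1
  linear_combination c * hs

theorem spinFactor_succ_add (c θ s : ℂ) (k : ℕ) (z : ℂ) :
    spinFactor c θ s (k + 1) (z + c) = spinFactor c θ s k z := by
  unfold spinFactor
  congr 1
  push_cast
  ring

section SpinChain

variable {N : ℕ} (c : ℂ) (θ s : Fin N → ℂ) (m : Fin N → ℕ)

noncomputable def spinCore (z : ℂ) : ℂ :=
  ∏ i, ∏ k ∈ Icc 1 (m i - 1), spinFactor c (θ i) (s i) k z

variable {m}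

theorem prod_spinFactor_Icc_one (hm : ∀ i, 0 < m i) (z : ℂ) :
    ∏ i, ∏ k ∈ Icc 1 (m i), spinFactor c (θ i) (s i) k z
      = (∏ i, spinFactor c (θ i) (s i) (m i) z) * spinCore c θ s m z := by
  rw [spinCore, ← prod_mul_distrib]
  refine prod_congr rfl fun i _ => ?_
  rw [prod_Icc_one_eq_prod_Icc_pred_mul _ (hm i), mul_comm]

theorem prod_spinFactor_Icc_one_add (hm : ∀ i, 0 < m i) (z : ℂ) :
    ∏ i, ∏ k ∈ Icc 1 (m i), spinFactor c (θ i) (s i) k (z + c)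
      = (∏ i, spinFactor c (θ i) (s i) 0 z) * spinCore c θ s m z := by
  rw [spinCore, ← prod_mul_distrib]
  refine prod_congr rfl fun i _ => ?_
  simp only [prod_Icc_one_eq_prod_Icc_zero_pred _ (hm i), spinFactor_succ_add,
    prod_Icc_zero_eq_mul]

theorem prod_spinFactor_Icc_zero (hm : ∀ i, 0 < m i) (z : ℂ) :
    ∏ i, ∏ k ∈ Icc 0 (m i), spinFactor c (θ i) (s i) k z
      = (∏ i, spinFactor c (θ i) (s i) 0 z) *
        ((∏ i, spinFactor c (θ i) (s i) (m i) z) * spinCore c θ s m z) := by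
  rw [← prod_spinFactor_Icc_one c θ s hm, ← prod_mul_distrib]
  exact prod_congr rfl fun i _ => prod_Icc_zero_eq_mul _ _

end SpinChain

theorem modified_quantum_Wronskian_general (c : ℂ) (N : ℕ) (θ : Fin N → ℂ)
    (s : Fin N → ℂ) (m : Fin N → ℕ) (hm : ∀ i, 0 < m i)
    (hs : ∀ i, 2 * s i = (m i : ℂ))
    (κ κt ρ1 ρ2 : ℂ)
    (lam1 lam2 lam F Qp Qm : ℂ → ℂ)
    (hlam1 : ∀ z, lam1 z = ∏ i, (z - θ i + c * (s i + 1 / 2)) / c)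
    (hlam2 : ∀ z, lam2 z = ∏ i, (z - θ i - c * (s i - 1 / 2)) / c)
    (hlam : ∀ z, lam z =
      ∏ i, ∏ k ∈ Finset.Icc 1 (m i), (z - θ i + c * (s i - (k : ℂ) + 1 / 2)) / c)
    (hF : ∀ z, F z =
      ∏ i, ∏ k ∈ Finset.Icc 0 (m i), (z - θ i + c * (s i - (k : ℂ) + 1 / 2)) / c)
    (Λ : ℂ → ℂ)
    (hTQp : ∀ z, Λ z * Qp z = (κt - ρ1) * lam1 z * Qp (z - c)
      + (κ - ρ2) * lam2 z * Qp (z + c) + (ρ1 + ρ2) * F z)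
    (hTQm : ∀ z, Λ z * Qm z = (κ - ρ2) * lam1 z * Qm (z - c)
      + (κt - ρ1) * lam2 z * Qm (z + c) + (ρ1 + ρ2) * F z) :
    ∀ z, (lam (z + c) * ((κt - ρ1) * Qp (z - c) * Qm z - (κ - ρ2) * Qp z * Qm (z - c))
        - lam z * ((κt - ρ1) * Qp z * Qm (z + c) - (κ - ρ2) * Qp (z + c) * Qm z)
      = (ρ1 + ρ2) * (Qp z - Qm z) * lam z * lam (z + c)) ∧
      (lam z ≠ 0 → lam (z + c) ≠ 0 →
        ((κt - ρ1) * Qp (z - c) * Qm z - (κ - ρ2) * Qp z * Qm (z - c)) / lam z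
          - ((κt - ρ1) * Qp z * Qm (z + c) - (κ - ρ2) * Qp (z + c) * Qm z) / lam (z + c)
        = (ρ1 + ρ2) * (Qp z - Qm z)) := by
  intro z
  have hlam1z : lam1 z = ∏ i, spinFactor c (θ i) (s i) 0 z := by
    simp only [hlam1, spinFactor_zero]
  have hlam2z : lam2 z = ∏ i, spinFactor c (θ i) (s i) (m i) z := by
    simp only [hlam2, spinFactor_of_two_mul_eq (hs _)]
  set P := spinCore c θ s m z
  have hlamz : lam z = lam2 z * P := by
    rw [hlam2z, ← prod_spinFactor_Icc_one c θ s hm]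
    exact hlam z
  have hlamzc : lam (z + c) = lam1 z * P := by
    rw [hlam1z, ← prod_spinFactor_Icc_one_add c θ s hm]
    exact hlam (z + c)
  have hFz : F z = lam1 z * (lam2 z * P) := by
    rw [hlam1z, hlam2z, ← prod_spinFactor_Icc_zero c θ s hm]
    exact hF z
  have hp := hTQp z
  have hq := hTQm z
  rw [hFz] at hp hq
  have wronskian : lam (z + c) * ((κt - ρ1) * Qp (z - c) * Qm z - (κ - ρ2) * Qp z * Qm (z - c))
        - lam z * ((κt - ρ1) * Qp z * Qm (z + c) - (κ - ρ2) * Qp (z + c) * Qm z)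
      = (ρ1 + ρ2) * (Qp z - Qm z) * lam z * lam (z + c) := by
    rw [hlamz, hlamzc]
    linear_combination P * (Qp z * hq - Qm z * hp)
  refine ⟨wronskian, fun h0 h1 => ?_⟩
  rw [div_sub_div _ _ h0 h1, div_eq_iff (mul_ne_zero h0 h1)]
  linear_combination wronskian

/-- Modified quantum Wronskian equation: if the two functional Baxter Q-operators
`Q⁺`, `Q⁻` (monic degree-`S` polynomials over `c`) solve the two inhomogeneous
Baxter T-Q equations for a common eigenvalue `Λ`, then for all `z`
`λ(z+c)[(κ̃-ρ₁)Q⁺(z-c)Q⁻(z) - (κ-ρ₂)Q⁺(z)Q⁻(z-c)]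
 - λ(z)[(κ̃-ρ₁)Q⁺(z)Q⁻(z+c) - (κ-ρ₂)Q⁺(z+c)Q⁻(z)]
 = (ρ₁+ρ₂)(Q⁺(z) - Q⁻(z)) λ(z) λ(z+c)`;
equivalently, `W(z) - W(z+c) = (ρ₁+ρ₂)(Q⁺(z) - Q⁻(z))` wherever `λ` does not vanish. -/
theorem modified_quantum_Wronskian (c : ℂ) (hc : c ≠ 0) (N : ℕ) (θ : Fin N → ℂ)
    (s : Fin N → ℂ) (m : Fin N → ℕ) (hm : ∀ i, 0 < m i)
    (hs : ∀ i, 2 * s i = (m i : ℂ))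
    (S : ℕ) (hS : S = ∑ i, m i) (κ κt ρ1 ρ2 : ℂ)
    (u v : Fin S → ℂ)
    (lam1 lam2 lam F Qp Qm : ℂ → ℂ)
    (hlam1 : ∀ z, lam1 z = ∏ i, (z - θ i + c * (s i + 1 / 2)) / c)
    (hlam2 : ∀ z, lam2 z = ∏ i, (z - θ i - c * (s i - 1 / 2)) / c)
    (hlam : ∀ z, lam z =
      ∏ i, ∏ k ∈ Finset.Icc 1 (m i), (z - θ i + c * (s i - (k : ℂ) + 1 / 2)) / c)
    (hF : ∀ z, F z =
      ∏ i, ∏ k ∈ Finset.Icc 0 (m i), (z - θ i + c * (s i - (k : ℂ) + 1 / 2)) / c)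
    (hQp : ∀ z, Qp z = ∏ i, (z - u i) / c)
    (hQm : ∀ z, Qm z = ∏ i, (z - v i) / c)
    (Λ : ℂ → ℂ)
    (hTQp : ∀ z, Λ z * Qp z = (κt - ρ1) * lam1 z * Qp (z - c)
      + (κ - ρ2) * lam2 z * Qp (z + c) + (ρ1 + ρ2) * F z)
    (hTQm : ∀ z, Λ z * Qm z = (κ - ρ2) * lam1 z * Qm (z - c)
      + (κt - ρ1) * lam2 z * Qm (z + c) + (ρ1 + ρ2) * F z) :
    ∀ z, (lam (z + c) * ((κt - ρ1) * Qp (z - c) * Qm z - (κ - ρ2) * Qp z * Qm (z - c))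
        - lam z * ((κt - ρ1) * Qp z * Qm (z + c) - (κ - ρ2) * Qp (z + c) * Qm z)
      = (ρ1 + ρ2) * (Qp z - Qm z) * lam z * lam (z + c)) ∧
      (lam z ≠ 0 → lam (z + c) ≠ 0 →
        ((κt - ρ1) * Qp (z - c) * Qm z - (κ - ρ2) * Qp z * Qm (z - c)) / lam z
          - ((κt - ρ1) * Qp z * Qm (z + c) - (κ - ρ2) * Qp (z + c) * Qm z) / lam (z + c)
        = (ρ1 + ρ2) * (Qp z - Qm z)) :=
  modified_quantum_Wronskian_general c N θ s m hm hs κ κt ρ1 ρ2 lam1 lam2 lam F Qp Qm hlam1 hlam2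
    hlam hF Λ hTQp hTQm
end

section
/- Fix c ∈ ℂ nonzero, N ∈ ℕ, θ_1, …, θ_N ∈ ℂ, positive half-integers s_1, …, s_N, and set S = Σ_{i=1}^N 2s_i. Let κ, κ̃, ρ_1, ρ_2, α⁺, α⁻ ∈ ℂ with α⁺α⁻ = (κ̃−ρ_1)(κ−ρ_2). Let q and Q⁺ be polynomials, with Q⁺(z) = ∏_{i=1}^S (z−u_i)/c for some u_1, …, u_S ∈ ℂ, and suppose there is a function Λ : ℂ → ℂ such that for all z ∈ ℂ: Λ(z) q(z) = α⁺ λ_1(z) q(z−c) + α⁻ λ_2(z) q(z+c) and Λ(z) Q⁺(z) = (κ̃−ρ_1) λ_1(z) Q⁺(z−c) + (κ−ρ_2) λ_2(z) Q⁺(z+c) + (ρ_1+ρ_2) F(z). Then for all z ∈ ℂ: (κ̃−ρ_1) λ(z+c)·[α⁺ q(z−c) Q⁺(z) − (κ̃−ρ_1) q(z) Q⁺(z−c)] − α⁻ λ(z)·[α⁺ q(z) Q⁺(z+c) − (κ̃−ρ_1) q(z+c) Q⁺(z)] = (κ̃−ρ_1)(ρ_1+ρ_2) q(z) λ(z) λ(z+c);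 equivalently, with Ŵ(z) = (α⁺ q(z−c)Q⁺(z) − (κ̃−ρ_1) q(z)Q⁺(z−c))/λ(z) and r = α⁻/(κ̃−ρ_1) (assuming κ̃ ≠ ρ_1), one has Ŵ(z) − r Ŵ(z+c) = (ρ_1+ρ_2) q(z). -/
open Finset

/-!
Cross-multiplying the two T-Q relations eliminates `Λ` and, thanks to `α⁺α⁻ = (κ̃-ρ₁)(κ-ρ₂)`,
yields `(κ̃-ρ₁) λ₁(z) W(z) - α⁻ λ₂(z) W(z+c) = (κ̃-ρ₁)(ρ₁+ρ₂) q(z) λ₁(z) λ(z)` for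
`W(z) = α⁺ q(z-c) Q⁺(z) - (κ̃-ρ₁) q(z) Q⁺(z-c)`, using `F = λ₁ λ`. Each spin-`sᵢ` block of `λ` is a
string of `2sᵢ` factors in steps of `c`, so `λ(z+c) = λ₁(z) M(z)` and `λ(z) = λ₂(z) M(z)` with `M`
the product of the `2sᵢ - 1` interior factors; multiplying the first identity by `M(z)` gives
the claim.
-/

section Intervals

variable {M : Type*} [CommMonoid M] (f : ℕ → M)

lemma prod_Icc_zero_eq_mul_prod_Icc_one (m : ℕ) :
    ∏ k ∈ Icc 0 m, f k = f 0 * ∏ k ∈ Icc 1 m, f k := by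
  rw [← mul_prod_Ioc_eq_prod_Icc m.zero_le, ← Icc_add_one_left_eq_Ioc, zero_add]

lemma prod_Icc_one_eq_mul_prod_Ioo {m : ℕ} (hm : 0 < m) :
    ∏ k ∈ Icc 1 m, f k = f m * ∏ k ∈ Ioo 0 m, f k := by
  rw [mul_prod_Ioo_eq_prod_Ioc hm, ← Icc_add_one_left_eq_Ioc, zero_add]

lemma prod_Icc_one_eq_prod_Ico_zero_succ (m : ℕ) :
    ∏ k ∈ Icc 1 m, f k = ∏ k ∈ Ico 0 m, f (k + 1) := by
  rw [prod_Ico_add', zero_add, Ico_add_one_right_eq_Icc]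

end Intervals

section SiteFactor

variable {K : Type*} [Field K] (c θ s z : K)

/-- `λ₁` and `λ₂` are the products over the sites of the factors `k = 0` and `k = 2s`, and `λ`
the product of the factors `k = 1, …, 2s`. -/
def siteFactor (k : ℕ) : K := (z - θ + c * (s - k + 1 / 2)) / c

lemma siteFactor_zero : siteFactor c θ s z 0 = (z - θ + c * (s + 1 / 2)) / c := by
  simp [siteFactor]

lemma siteFactor_of_two_mul_eq {m : ℕ} (hs : 2 * s = m) :
    siteFactor c θ s z m = (z - θ - c * (s - 1 / 2)) / c := by
  rw [siteFactor, ← hs]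
  ring

lemma siteFactor_add_succ (k : ℕ) :
    siteFactor c θ s (z + c) (k + 1) = siteFactor c θ s z k := by
  simp only [siteFactor]
  push_cast
  ring

lemma prod_Icc_siteFactor_add {m : ℕ} (hm : 0 < m) :
    ∏ k ∈ Icc 1 m, siteFactor c θ s (z + c) k
      = siteFactor c θ s z 0 * ∏ k ∈ Ioo 0 m, siteFactor c θ s z k := by
  simp only [prod_Icc_one_eq_prod_Ico_zero_succ, siteFactor_add_succ,
    mul_prod_Ioo_eq_prod_Ico hm]

end SiteFactor

lemma wronskian_of_TQ {R : Type*} [CommRing R]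
    {Λ qPrev q qNext QPrev Q QNext l₁ l₂ l a b r αp αm : R} (hα : αp * αm = a * b)
    (hq : Λ * q = αp * l₁ * qPrev + αm * l₂ * qNext)
    (hQ : Λ * Q = a * l₁ * QPrev + b * l₂ * QNext + r * (l₁ * l)) :
    a * l₁ * (αp * qPrev * Q - a * q * QPrev) - αm * l₂ * (αp * q * QNext - a * qNext * Q)
      = a * r * q * l₁ * l := by
  linear_combination a * q * hQ - a * Q * hq - l₂ * q * QNext * hα

theorem wronskian_homogeneous_vs_inhomogeneous_general (c : ℂ)
    (N : ℕ) (θ : Fin N → ℂ)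
    (s : Fin N → ℂ) (m : Fin N → ℕ) (hm : ∀ i, 0 < m i)
    (hs : ∀ i, 2 * s i = (m i : ℂ))
    (κ κt ρ1 ρ2 αp αm : ℂ) (hα : αp * αm = (κt - ρ1) * (κ - ρ2))
    (lam1 lam2 lam F Qp : ℂ → ℂ) (q : Polynomial ℂ)
    (hlam1 : ∀ z, lam1 z = ∏ i, (z - θ i + c * (s i + 1 / 2)) / c)
    (hlam2 : ∀ z, lam2 z = ∏ i, (z - θ i - c * (s i - 1 / 2)) / c)
    (hlam : ∀ z, lam z =
      ∏ i, ∏ k ∈ Finset.Icc 1 (m i), (z - θ i + c * (s i - (k : ℂ) + 1 / 2)) / c)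
    (hF : ∀ z, F z =
      ∏ i, ∏ k ∈ Finset.Icc 0 (m i), (z - θ i + c * (s i - (k : ℂ) + 1 / 2)) / c)
    (Λ : ℂ → ℂ)
    (hTQq : ∀ z, Λ z * q.eval z = αp * lam1 z * q.eval (z - c)
      + αm * lam2 z * q.eval (z + c))
    (hTQP : ∀ z, Λ z * Qp z = (κt - ρ1) * lam1 z * Qp (z - c)
      + (κ - ρ2) * lam2 z * Qp (z + c) + (ρ1 + ρ2) * F z) :
    ∀ z, ((κt - ρ1) * lam (z + c) *
          (αp * q.eval (z - c) * Qp z - (κt - ρ1) * q.eval z * Qp (z - c))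
        - αm * lam z *
          (αp * q.eval z * Qp (z + c) - (κt - ρ1) * q.eval (z + c) * Qp z)
      = (κt - ρ1) * (ρ1 + ρ2) * q.eval z * lam z * lam (z + c)) ∧
      (κt ≠ ρ1 → lam z ≠ 0 → lam (z + c) ≠ 0 →
        (αp * q.eval (z - c) * Qp z - (κt - ρ1) * q.eval z * Qp (z - c)) / lam z
          - (αm / (κt - ρ1)) *
            ((αp * q.eval z * Qp (z + c) - (κt - ρ1) * q.eval (z + c) * Qp z) / lam (z + c))
        = (ρ1 + ρ2) * q.eval z) := by
  intro z
  have hlam' : ∀ z, lam z = ∏ i, ∏ k ∈ Icc 1 (m i), siteFactor c (θ i) (s i) z k := hlam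
  have hlam1' : lam1 z = ∏ i, siteFactor c (θ i) (s i) z 0 := by
    simp only [hlam1, siteFactor_zero]
  have hlam2' : lam2 z = ∏ i, siteFactor c (θ i) (s i) z (m i) := by
    simp only [hlam2, siteFactor_of_two_mul_eq _ _ _ _ (hs _)]
  set M := ∏ i, ∏ k ∈ Ioo 0 (m i), siteFactor c (θ i) (s i) z k
  have hlam_add : lam (z + c) = lam1 z * M := by
    rw [hlam', hlam1', ← prod_mul_distrib]
    exact prod_congr rfl fun i _ => prod_Icc_siteFactor_add _ _ _ _ (hm i)
  have hlam_eq : lam z = lam2 z * M := by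
    rw [hlam', hlam2', ← prod_mul_distrib]
    exact prod_congr rfl fun i _ => prod_Icc_one_eq_mul_prod_Ioo _ (hm i)
  have hF_eq : F z = lam1 z * lam z := by
    rw [hF, hlam1', hlam', ← prod_mul_distrib]
    exact prod_congr rfl fun i _ => prod_Icc_zero_eq_mul_prod_Icc_one _ _
  have hW := wronskian_of_TQ hα (hTQq z) (hF_eq ▸ hTQP z)
  have hmain : (κt - ρ1) * lam (z + c) *
          (αp * q.eval (z - c) * Qp z - (κt - ρ1) * q.eval z * Qp (z - c))
        - αm * lam z *
          (αp * q.eval z * Qp (z + c) - (κt - ρ1) * q.eval (z + c) * Qp z)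
      = (κt - ρ1) * (ρ1 + ρ2) * q.eval z * lam z * lam (z + c) := by
    rw [hlam_add, hlam_eq]
    rw [hlam_eq] at hW
    linear_combination M * hW
  refine ⟨hmain, fun hne h₁ h₂ => ?_⟩
  field_simp [sub_ne_zero_of_ne hne]
  linear_combination hmain

/-- Wronskian-type relation between the usual (homogeneous) Baxter T-Q
parametrization `q` of the twisted transfer matrix eigenvalue `Λ` (with twist
eigenvalues `α⁺α⁻ = (κ̃-ρ₁)(κ-ρ₂)`) and its inhomogeneous modified-Bethe-ansatz
parametrization `Q⁺`: for all `z`,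
`(κ̃-ρ₁)λ(z+c)[α⁺q(z-c)Q⁺(z) - (κ̃-ρ₁)q(z)Q⁺(z-c)]
 - α⁻λ(z)[α⁺q(z)Q⁺(z+c) - (κ̃-ρ₁)q(z+c)Q⁺(z)]
 = (κ̃-ρ₁)(ρ₁+ρ₂) q(z) λ(z) λ(z+c)`;
equivalently `Ŵ(z) - (α⁻/(κ̃-ρ₁)) Ŵ(z+c) = (ρ₁+ρ₂) q(z)` when `κ̃ ≠ ρ₁` and `λ`
does not vanish. -/
theorem wronskian_homogeneous_vs_inhomogeneous (c : ℂ) (hc : c ≠ 0)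
    (N : ℕ) (θ : Fin N → ℂ)
    (s : Fin N → ℂ) (m : Fin N → ℕ) (hm : ∀ i, 0 < m i)
    (hs : ∀ i, 2 * s i = (m i : ℂ))
    (S : ℕ) (hS : S = ∑ i, m i)
    (κ κt ρ1 ρ2 αp αm : ℂ) (hα : αp * αm = (κt - ρ1) * (κ - ρ2))
    (u : Fin S → ℂ)
    (lam1 lam2 lam F Qp : ℂ → ℂ) (q : Polynomial ℂ)
    (hlam1 : ∀ z, lam1 z = ∏ i, (z - θ i + c * (s i + 1 / 2)) / c)
    (hlam2 : ∀ z, lam2 z = ∏ i, (z - θ i - c * (s i - 1 / 2)) / c)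
    (hlam : ∀ z, lam z =
      ∏ i, ∏ k ∈ Finset.Icc 1 (m i), (z - θ i + c * (s i - (k : ℂ) + 1 / 2)) / c)
    (hF : ∀ z, F z =
      ∏ i, ∏ k ∈ Finset.Icc 0 (m i), (z - θ i + c * (s i - (k : ℂ) + 1 / 2)) / c)
    (hQp : ∀ z, Qp z = ∏ i, (z - u i) / c)
    (Λ : ℂ → ℂ)
    (hTQq : ∀ z, Λ z * q.eval z = αp * lam1 z * q.eval (z - c)
      + αm * lam2 z * q.eval (z + c))
    (hTQP : ∀ z, Λ z * Qp z = (κt - ρ1) * lam1 z * Qp (z - c)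
      + (κ - ρ2) * lam2 z * Qp (z + c) + (ρ1 + ρ2) * F z) :
    ∀ z, ((κt - ρ1) * lam (z + c) *
          (αp * q.eval (z - c) * Qp z - (κt - ρ1) * q.eval z * Qp (z - c))
        - αm * lam z *
          (αp * q.eval z * Qp (z + c) - (κt - ρ1) * q.eval (z + c) * Qp z)
      = (κt - ρ1) * (ρ1 + ρ2) * q.eval z * lam z * lam (z + c)) ∧
      (κt ≠ ρ1 → lam z ≠ 0 → lam (z + c) ≠ 0 →
        (αp * q.eval (z - c) * Qp z - (κt - ρ1) * q.eval z * Qp (z - c)) / lam z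
          - (αm / (κt - ρ1)) *
            ((αp * q.eval z * Qp (z + c) - (κt - ρ1) * q.eval (z + c) * Qp z) / lam (z + c))
        = (ρ1 + ρ2) * q.eval z) :=
  wronskian_homogeneous_vs_inhomogeneous_general c N θ s m hm hs κ κt ρ1 ρ2 αp αm hα lam1 lam2 lam F
    Qp q hlam1 hlam2 hlam hF Λ hTQq hTQP
end

section
/- Let R be an associative unital ℂ-algebra and c ∈ ℂ nonzero. Suppose a, b : ℂ → R satisfy b(u)b(v) = b(v)b(u) for all u, v, and a(v)b(u) = f(v,u) b(u)a(v) + g(u,v) b(v)a(u) for all distinct u, v. Then for every u ∈ ℂ, every integer n ≥ 1, and every z ∈ ℂ with z ≠ u−cj for j = 1, …, n: a(z) ∏_{j=1}^n b(u−cj) = (∏_{j=1}^n f(z, u−cj)) (∏_{j=1}^n b(u−cj)) a(z) + g(u−c, z) (∏_{j=2}^n f(u−c, u−cj)) b(z) (∏_{j=2}^n b(u−cj)) a(u−c). -/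
/-!
Induct on `n`, peeling off the first factor `b (u - c)` of the string, so that what remains is the
string of length `n - 1` based at `x = u - c`. Exchanging `a z` past `b x` and applying the
induction hypothesis to both `a z` and `a x` against the shorter string gives the two wanted terms
plus two terms in `b x * b z * (rest) * a (x - c)`. Their coefficients add up to
`g(x - c, z) f(x - c, x)` by the identity `f(z,x) g(y,z) + g(x,z) g(y,x) = g(y,z) f(y,x)`,
and `f(x - c, x) = 0`.
-/

open Finset

namespace Finset

variable {M : Type*} [Monoid M]

theorem noncommProd_Icc_add_one (f : ℕ → M) (m n : ℕ) (comm) (comm') :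
    (Icc (m + 1) (n + 1)).noncommProd f comm =
      (Icc m n).noncommProd (fun j => f (j + 1)) comm' := by
  unfold noncommProd
  congr 1
  rw [← map_add_right_Icc, map_val, Multiset.map_map]
  rfl

theorem noncommProd_Icc_eq_mul (f : ℕ → M) {m n : ℕ} (h : m ≤ n) (comm) (comm') :
    (Icc m n).noncommProd f comm = f m * (Icc (m + 1) n).noncommProd f comm' := by
  simp_rw [← insert_Icc_add_one_left_eq_Icc h]
  exact noncommProd_insert_of_notMem _ _ _ _ (by simp)

end Finset

section StringShift

variable {M : Type*}

theorem noncommProd_string_Icc_two [Monoid M] (φ : ℂ → M) (c u : ℂ) (n : ℕ) (comm) (comm') :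
    (Icc 2 (n + 1)).noncommProd (fun j => φ (u - c * j)) comm =
      (Icc 1 n).noncommProd (fun j => φ (u - c - c * j)) comm' := by
  have shift (j : ℕ) : u - c - c * j = u - c * ↑(j + 1) := by push_cast; ring
  simp only [shift]
  exact noncommProd_Icc_add_one (fun j => φ (u - c * j)) 1 n _ _

theorem noncommProd_string_Icc_one [Monoid M] (φ : ℂ → M) (c u : ℂ) (n : ℕ) (comm) (comm') :
    (Icc 1 (n + 1)).noncommProd (fun j => φ (u - c * j)) comm =
      φ (u - c) * (Icc 1 n).noncommProd (fun j => φ (u - c - c * j)) comm' := by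
  rw [noncommProd_Icc_eq_mul _ (by omega) comm (comm.mono (Icc_subset_Icc_left (by omega))),
    noncommProd_string_Icc_two φ c u n _ comm', Nat.cast_one, mul_one]

theorem prod_string_Icc_two [CommMonoid M] (φ : ℂ → M) (c u : ℂ) (n : ℕ) :
    ∏ j ∈ Icc 2 (n + 1), φ (u - c * j) = ∏ j ∈ Icc 1 n, φ (u - c - c * j) := by
  simpa only [noncommProd_eq_prod] using
    noncommProd_string_Icc_two φ c u n (fun _ _ _ _ _ => Commute.all _ _)
      (fun _ _ _ _ _ => Commute.all _ _)

theorem prod_string_Icc_one [CommMonoid M] (φ : ℂ → M) (c u : ℂ) (n : ℕ) :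
    ∏ j ∈ Icc 1 (n + 1), φ (u - c * j) = φ (u - c) * ∏ j ∈ Icc 1 n, φ (u - c - c * j) := by
  simpa only [noncommProd_eq_prod] using
    noncommProd_string_Icc_one φ c u n (fun _ _ _ _ _ => Commute.all _ _)
      (fun _ _ _ _ _ => Commute.all _ _)

end StringShift

noncomputable def yangF (c u v : ℂ) : ℂ := (u - v + c) / (u - v)

noncomputable def yangG (c u v : ℂ) : ℂ := c / (u - v)

theorem yangF_sub_self (c x : ℂ) : yangF c (x - c) x = 0 := by
  simp [yangF]

theorem yangF_mul_yangG_add_yangG_mul_yangG {c x y z : ℂ} (hxy : x ≠ y) (hyz : y ≠ z)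
    (hxz : x ≠ z) :
    yangF c z x * yangG c y z + yangG c x z * yangG c y x = yangG c y z * yangF c y x := by
  unfold yangF yangG
  field_simp [sub_ne_zero.2 hxy, sub_ne_zero.2 hyz, sub_ne_zero.2 hxz.symm]
  ring

section StringCommutation

variable {R : Type*} [Ring R]

def stringProd (b : ℂ → R) (hbb : ∀ u v : ℂ, b u * b v = b v * b u) (c u : ℂ) (s : Finset ℕ) :
    R :=
  s.noncommProd (fun j => b (u - c * j)) (fun _ _ _ _ _ => hbb _ _)

variable {c : ℂ} {a b : ℂ → R} (hbb : ∀ u v : ℂ, b u * b v = b v * b u)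

theorem stringProd_Icc_two (u : ℂ) (n : ℕ) :
    stringProd b hbb c u (Icc 2 (n + 1)) = stringProd b hbb c (u - c) (Icc 1 n) :=
  noncommProd_string_Icc_two b c u n _ _

theorem stringProd_Icc_one (u : ℂ) (n : ℕ) :
    stringProd b hbb c u (Icc 1 (n + 1)) = b (u - c) * stringProd b hbb c (u - c) (Icc 1 n) :=
  noncommProd_string_Icc_one b c u n _ _

theorem a_mul_stringProd [Algebra ℂ R] (hc : c ≠ 0)
    (hab : ∀ u v, u ≠ v → a v * b u = yangF c v u • (b u * a v) + yangG c u v • (b v * a u))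
    (n : ℕ) (u z : ℂ) (hz : ∀ j ∈ Icc 1 (n + 1), z ≠ u - c * j) :
    a z * stringProd b hbb c u (Icc 1 (n + 1)) =
      (∏ j ∈ Icc 1 (n + 1), yangF c z (u - c * j)) • (stringProd b hbb c u (Icc 1 (n + 1)) * a z)
      + (yangG c (u - c) z * ∏ j ∈ Icc 2 (n + 1), yangF c (u - c) (u - c * j)) •
        (b z * stringProd b hbb c u (Icc 2 (n + 1)) * a (u - c)) := by
  induction n generalizing u z with
  | zero =>
    have hzx : z ≠ u - c := by simpa using hz 1 (by simp)
    simpa [stringProd] using hab (u - c) z hzx.symm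
  | succ n ih =>
    have hzx : z ≠ u - c := by simpa using hz 1 (by simp)
    have hzy : z ≠ u - c - c := fun h => hz 2 (by simp) (by rw [h]; push_cast; ring)
    have hz' : ∀ j ∈ Icc 1 (n + 1), z ≠ u - c - c * j := fun j hj h =>
      hz (j + 1) (by simp at hj ⊢; omega) (by rw [h]; push_cast; ring)
    have hx : ∀ j ∈ Icc 1 (n + 1), u - c ≠ u - c - c * j := fun j hj h =>
      mul_ne_zero hc (Nat.cast_ne_zero.2 (by simp at hj; omega) : (j : ℂ) ≠ 0)
        (by linear_combination h)
    have hcancel : yangF c z (u - c) * yangG c (u - c - c) z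
        + yangG c (u - c) z * yangG c (u - c - c) (u - c) = 0 := by
      rw [yangF_mul_yangG_add_yangG_mul_yangG (fun h => hc (by linear_combination h))
        hzy.symm hzx.symm, yangF_sub_self, mul_zero]
    rw [stringProd_Icc_two, prod_string_Icc_two, stringProd_Icc_one, prod_string_Icc_one,
      ← mul_assoc, hab (u - c) z hzx.symm, add_mul, smul_mul_assoc, smul_mul_assoc, mul_assoc,
      mul_assoc, ih (u - c) z hz', ih (u - c) (u - c) hx]
    simp only [mul_add, mul_smul_comm, ← mul_assoc, hbb (u - c) z]
    match_scalars
    · ring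
    · linear_combination (∏ j ∈ Icc 2 (n + 1), yangF c (u - c - c) (u - c - c * j)) * hcancel
    · ring

end StringCommutation

open Finset in
/-- String-commutation identity of Appendix B: for operators `a`, `b` with
`b(u)b(v) = b(v)b(u)` and `a(v)b(u) = f(v,u) b(u)a(v) + g(u,v) b(v)a(u)`
(with `g(u,v) = c/(u-v)`, `f(u,v) = (u-v+c)/(u-v)`, noting `f(x-c,x) = 0`),
the action of `a(z)` on the string product `∏_{j=1}^n b(u-cj)` produces only
two terms. -/
theorem string_commutation_identity
    {R : Type*} [Ring R] [Algebra ℂ R] (c : ℂ) (hc : c ≠ 0)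
    (a b : ℂ → R)
    (hbb : ∀ u v : ℂ, b u * b v = b v * b u)
    (hab : ∀ u v : ℂ, u ≠ v →
      a v * b u = ((v - u + c) / (v - u)) • (b u * a v)
        + (c / (u - v)) • (b v * a u))
    (u : ℂ) (n : ℕ) (hn : 1 ≤ n)
    (z : ℂ) (hz : ∀ j ∈ Finset.Icc 1 n, z ≠ u - c * (j : ℂ)) :
    a z * (Finset.Icc 1 n).noncommProd (fun j => b (u - c * (j : ℂ)))
        (fun _ _ _ _ _ => hbb _ _) =
      (∏ j ∈ Finset.Icc 1 n, (z - (u - c * (j : ℂ)) + c) / (z - (u - c * (j : ℂ)))) •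
        ((Finset.Icc 1 n).noncommProd (fun j => b (u - c * (j : ℂ)))
          (fun _ _ _ _ _ => hbb _ _) * a z)
      + ((c / ((u - c) - z)) *
          ∏ j ∈ Finset.Icc 2 n, ((u - c) - (u - c * (j : ℂ)) + c) / ((u - c) - (u - c * (j : ℂ)))) •
        (b z * (Finset.Icc 2 n).noncommProd (fun j => b (u - c * (j : ℂ)))
          (fun _ _ _ _ _ => hbb _ _) * a (u - c)) := by
  obtain ⟨n, rfl⟩ := Nat.exists_eq_add_of_le' hn
  exact a_mul_stringProd hbb hc hab n u z hz
end
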